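/- arXiv:2605.08681 — 7 statements merged into one kernel-verified Lean document; each statement's English description precedes it below -/
import Mathlib

section
/- Let d, m ≥ 1, let F̄ : ℝ^d → ℝ^d, let D_1, …, D_m be a partition of {1,…,d}, and let S_1, …, S_m be halos with D_i ⊆ S_i ⊆ {1,…,d} such that for each i there exists a map T_i : ℝ^{S_i} → ℝ^{D_i} with T_i(x_{S_i}) = (F̄(x))_{D_i} for all x ∈ ℝ^d. Define the lifted Core-Halo operator T̃_i : ℝ^d → ℝ^d by (T̃_i(x))_{D_i} := T_i(x_{S_i}) and (T̃_i(x))_j := x_j for every j ∉ D_i. Then for every x ∈ ℝ^d, x = (1/m) ∑_{i=1}^m T̃_i(x) holds if and only if x = F̄(x). -/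
/-- **Exact recovery by Core-Halo (averaging identity).**
Let `D₁, …, Dₘ` be a partition of `{1,…,d}` with halos `Dᵢ ⊆ Sᵢ`, such that for each `i`
there is a map `Tᵢ : ℝ^{Sᵢ} → ℝ^{Dᵢ}` with `Tᵢ(x_{Sᵢ}) = (F̄ x)_{Dᵢ}` for all `x`.
Define the lifted Core-Halo operator `T̃ᵢ` by `(T̃ᵢ x)_{Dᵢ} = Tᵢ(x_{Sᵢ})` and
`(T̃ᵢ x)_j = x_j` for `j ∉ Dᵢ`.  Then `x = (1/m) ∑ᵢ T̃ᵢ(x)` iff `x = F̄(x)`. -/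
theorem core_halo_fixed_point_equivalence
    (d m : ℕ) (hd : 1 ≤ d) (hm : 1 ≤ m)
    (Fbar : (Fin d → ℝ) → (Fin d → ℝ))
    (D S : Fin m → Finset (Fin d))
    (hdisj : ∀ i j : Fin m, i ≠ j → Disjoint (D i) (D j))
    (hcover : ∀ j : Fin d, ∃ i : Fin m, j ∈ D i)
    (hDS : ∀ i, D i ⊆ S i)
    (T : ∀ i : Fin m, ({j : Fin d // j ∈ S i} → ℝ) → ({j : Fin d // j ∈ D i} → ℝ))
    (hT : ∀ (i : Fin m) (x : Fin d → ℝ) (j : {j : Fin d // j ∈ D i}),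
      T i (fun k => x k.1) j = Fbar x j.1)
    (Ttil : Fin m → (Fin d → ℝ) → (Fin d → ℝ))
    (hTtil : ∀ (i : Fin m) (x : Fin d → ℝ) (j : Fin d),
      Ttil i x j = if h : j ∈ D i then T i (fun k => x k.1) ⟨j, h⟩ else x j) :
    ∀ x : Fin d → ℝ,
      (x = fun j => (1 / (m : ℝ)) * ∑ i : Fin m, Ttil i x j) ↔ x = Fbar x := by
  intro x
  have key : ∀ j : Fin d, (∑ i : Fin m, Ttil i x j) = Fbar x j + ((m : ℝ) - 1) * x j := by
    intro j
    obtain ⟨i0, hi0⟩ := hcover j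
    have : ∀ i : Fin m, Ttil i x j = if i = i0 then Fbar x j else x j := by
      intro i
      rw [hTtil]
      by_cases h : i = i0
      · subst h
        rw [dif_pos hi0, if_pos rfl, hT]
      · rw [if_neg h, dif_neg]
        intro hmem
        exact Finset.disjoint_left.mp (hdisj i i0 h) hmem hi0
    simp only [this]
    rw [← Finset.add_sum_erase Finset.univ _ (Finset.mem_univ i0), if_pos rfl]
    have h2 : ∑ i ∈ Finset.univ.erase i0, (if i = i0 then Fbar x j else x j) = ((m:ℝ)-1) * x j := by
      rw [Finset.sum_congr rfl (fun i hi => if_neg (Finset.ne_of_mem_erase hi))]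
      rw [Finset.sum_const, Finset.card_erase_of_mem (Finset.mem_univ _), nsmul_eq_mul]
      simp only [Finset.card_univ, Fintype.card_fin]
      rw [Nat.cast_sub hm]; simp
    rw [h2]
  constructor
  · intro hx
    funext j
    have := congrFun hx j
    rw [key j] at this
    have hm' : (m : ℝ) ≠ 0 := by positivity
    field_simp at this
    linarith
  · intro hx
    funext j
    rw [key j, ← hx]
    have hm' : (m : ℝ) ≠ 0 := by positivity
    field_simp
    ring
end

section
/- Fix i ∈ {1,…,m}, u ∈ ℝ^{D_i}, and a norm ‖·‖_c on ℝ^{D_i}. Define Δ_i(u) := sup{ ‖(F̄(x))_{D_i} − (F̄(x'))_{D_i}‖_c : x, x' ∈ ℝ^d, x_{D_i} = x'_{D_i} = u }, the supremum taken in [0, ∞]. Then every strict decomposition operator T^hard with respect to the partition D_1, …, D_m satisfies sup_{x ∈ ℝ^d : x_{D_i} = u} ‖(T^hard(x) − F̄(x))_{D_i}‖_c ≥ (1/2) Δ_i(u), with both suprema taken in [0, ∞]. -/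
open scoped ENNReal

/-- **Bias of strict decomposition.**
Fix `i` and `u ∈ ℝ^{Dᵢ}` and a norm `‖·‖_c` on `ℝ^{Dᵢ}` (given here as a function `c`
satisfying the norm axioms).  Let `Δᵢ(u)` be the supremum (in `[0,∞]`) of
`‖(F̄ x)_{Dᵢ} − (F̄ x')_{Dᵢ}‖_c` over all `x, x'` with `x_{Dᵢ} = x'_{Dᵢ} = u`.
Then every strict decomposition operator `T^hard` (i.e. `(T^hard x)_{Dᵢ'} = Gᵢ'(x_{Dᵢ'})`
for every block) satisfies
`sup_{x : x_{Dᵢ} = u} ‖(T^hard x − F̄ x)_{Dᵢ}‖_c ≥ (1/2) Δᵢ(u)`. -/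
theorem strict_decomposition_bias
    (d m : ℕ) (hd : 1 ≤ d) (hm : 1 ≤ m)
    (D : Fin m → Finset (Fin d))
    (hdisj : ∀ i j : Fin m, i ≠ j → Disjoint (D i) (D j))
    (hcover : ∀ j : Fin d, ∃ i : Fin m, j ∈ D i)
    (Fbar : (Fin d → ℝ) → (Fin d → ℝ))
    (i : Fin m) (u : {j : Fin d // j ∈ D i} → ℝ)
    (c : ({j : Fin d // j ∈ D i} → ℝ) → ℝ)
    (hc_add : ∀ a b, c (a + b) ≤ c a + c b)
    (hc_smul : ∀ (r : ℝ) (a : {j : Fin d // j ∈ D i} → ℝ), c (r • a) = |r| * c a)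
    (hc_zero : ∀ a, c a = 0 ↔ a = 0)
    (Thard : (Fin d → ℝ) → (Fin d → ℝ))
    (G : ∀ i' : Fin m, ({j : Fin d // j ∈ D i'} → ℝ) → ({j : Fin d // j ∈ D i'} → ℝ))
    (hG : ∀ (i' : Fin m) (x : Fin d → ℝ) (j : {j : Fin d // j ∈ D i'}),
      Thard x j.1 = G i' (fun k => x k.1) j) :
    (1 / 2 : ℝ≥0∞) *
        (⨆ (x : Fin d → ℝ) (x' : Fin d → ℝ)
            (_ : (fun j : {j : Fin d // j ∈ D i} => x j.1) = u ∧
                 (fun j : {j : Fin d // j ∈ D i} => x' j.1) = u),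
          ENNReal.ofReal (c (fun j => Fbar x j.1 - Fbar x' j.1)))
      ≤ ⨆ (x : Fin d → ℝ) (_ : (fun j : {j : Fin d // j ∈ D i} => x j.1) = u),
          ENNReal.ofReal (c (fun j => Thard x j.1 - Fbar x j.1)) := by
  set S := ⨆ (x : Fin d → ℝ) (_ : (fun j : {j : Fin d // j ∈ D i} => x j.1) = u),
      ENNReal.ofReal (c (fun j => Thard x j.1 - Fbar x j.1)) with hSdef
  have hmem : ∀ x : Fin d → ℝ, (fun j : {j : Fin d // j ∈ D i} => x j.1) = u →
      ENNReal.ofReal (c (fun j => Thard x j.1 - Fbar x j.1)) ≤ S := by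
    intro x hx
    exact le_iSup_of_le x (le_iSup_of_le hx le_rfl)
  have key : (⨆ (x : Fin d → ℝ) (x' : Fin d → ℝ)
            (_ : (fun j : {j : Fin d // j ∈ D i} => x j.1) = u ∧
                 (fun j : {j : Fin d // j ∈ D i} => x' j.1) = u),
          ENNReal.ofReal (c (fun j => Fbar x j.1 - Fbar x' j.1))) ≤ S + S := by
    refine iSup_le fun x => iSup_le fun x' => iSup_le fun h => ?_
    obtain ⟨hx, hx'⟩ := h
    have heq : ∀ j : {j : Fin d // j ∈ D i}, Thard x j.1 = Thard x' j.1 := by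
      intro j
      rw [hG i x j, hG i x' j]
      congr 1
      rw [hx, hx']
    have h1 : (fun j : {j : Fin d // j ∈ D i} => Fbar x j.1 - Fbar x' j.1)
        = (fun j : {j : Fin d // j ∈ D i} => Thard x' j.1 - Fbar x' j.1) +
          (-1 : ℝ) • (fun j : {j : Fin d // j ∈ D i} => Thard x j.1 - Fbar x j.1) := by
      funext j
      simp [heq j]
    have h2 : c (fun j : {j : Fin d // j ∈ D i} => Fbar x j.1 - Fbar x' j.1)
        ≤ c (fun j : {j : Fin d // j ∈ D i} => Thard x' j.1 - Fbar x' j.1) +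
          c (fun j : {j : Fin d // j ∈ D i} => Thard x j.1 - Fbar x j.1) := by
      rw [h1]
      calc c _ ≤ c (fun j : {j : Fin d // j ∈ D i} => Thard x' j.1 - Fbar x' j.1) +
          c ((-1 : ℝ) • (fun j : {j : Fin d // j ∈ D i} => Thard x j.1 - Fbar x j.1)) :=
            hc_add _ _
        _ = _ := by rw [hc_smul]; norm_num
    calc ENNReal.ofReal (c (fun j => Fbar x j.1 - Fbar x' j.1))
        ≤ ENNReal.ofReal (c (fun j : {j : Fin d // j ∈ D i} => Thard x' j.1 - Fbar x' j.1) +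
          c (fun j : {j : Fin d // j ∈ D i} => Thard x j.1 - Fbar x j.1)) :=
          ENNReal.ofReal_le_ofReal h2
      _ ≤ ENNReal.ofReal (c (fun j : {j : Fin d // j ∈ D i} => Thard x' j.1 - Fbar x' j.1)) +
          ENNReal.ofReal (c (fun j : {j : Fin d // j ∈ D i} => Thard x j.1 - Fbar x j.1)) :=
          ENNReal.ofReal_add_le
      _ ≤ S + S := add_le_add (hmem x' hx') (hmem x hx)
  calc (1 / 2 : ℝ≥0∞) * _ ≤ (1 / 2 : ℝ≥0∞) * (S + S) := mul_le_mul_right key _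
    _ = S := by
        rw [← two_mul, ← mul_assoc, one_div,
          ENNReal.inv_mul_cancel (by norm_num) (by norm_num), one_mul]
end

section
/- Let (S, A, P, r, γ) be a finite discounted MDP with Bellman optimality operator H. Let C_1, …, C_m be a partition of S and let S_1, …, S_m be state halos with C_i ⊆ S_i ⊆ S satisfying ∑_{s' ∈ S_i} P(s'|s,a) = 1 for every i, every s ∈ C_i, and every a ∈ A. For each i define the local Bellman operator (H_i Q)(s,a) := ∑_{s' ∈ S_i} P(s'|s,a)(r(s,a,s') + γ max_{b ∈ A} Q(s',b)) for (s,a) ∈ C_i × A, and the lifted operator H̃_i on ℝ^{S×A} by (H̃_i Q)(s,a) := (H_i Q)(s,a) if s ∈ C_i and (H̃_i Q)(s,a) := Q(s,a) if s ∉ C_i. Then the averaged operator Ĥ(Q) := (1/m) ∑_{i=1}^m H̃_i Q satisfies Ĥ(Q) = (1 − 1/m) Q + (1/m) H Q for every Q ∈ ℝ^{S×A}; consequently, Ĥ(Q) = Q if and only if H Q = Q. -/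
/-- **Exact recovery of the global Bellman equation under a Core-Halo decomposition.**
For a finite discounted MDP with Bellman optimality operator `H`, a partition
`C₁, …, Cₘ` of the state space and state halos `Sᵢ ⊇ Cᵢ` with `P(Sᵢ | s,a) = 1` for
all `s ∈ Cᵢ, a ∈ A`, the averaged lifted operator `Ĥ Q = (1/m) ∑ᵢ H̃ᵢ Q` satisfies
`Ĥ Q = (1 − 1/m) Q + (1/m) H Q`; consequently `Ĥ Q = Q ↔ H Q = Q`. -/
theorem core_halo_bellman_exact_recovery
    (S A : Type) [Fintype S] [Fintype A] [Nonempty S] [Nonempty A] [DecidableEq S]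
    (P : S → A → S → ℝ) (r : S → A → S → ℝ) (γ : ℝ)
    (hP0 : ∀ s a s', 0 ≤ P s a s') (hP1 : ∀ s a, ∑ s', P s a s' = 1)
    (hγ : 0 < γ ∧ γ < 1)
    (m : ℕ) (hm : 1 ≤ m)
    (C Sh : Fin m → Finset S)
    (hdisj : ∀ i j : Fin m, i ≠ j → Disjoint (C i) (C j))
    (hcover : ∀ s : S, ∃ i : Fin m, s ∈ C i)
    (hCS : ∀ i, C i ⊆ Sh i)
    (hhalo : ∀ i : Fin m, ∀ s ∈ C i, ∀ a : A, ∑ s' ∈ Sh i, P s a s' = 1)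
    (H : (S → A → ℝ) → S → A → ℝ)
    (hH : ∀ Q s a, H Q s a =
      ∑ s', P s a s' * (r s a s' + γ * Finset.univ.sup' Finset.univ_nonempty (Q s')))
    (Hi : Fin m → (S → A → ℝ) → S → A → ℝ)
    (hHi : ∀ i Q s a, Hi i Q s a =
      ∑ s' ∈ Sh i, P s a s' * (r s a s' + γ * Finset.univ.sup' Finset.univ_nonempty (Q s')))
    (Htil : Fin m → (S → A → ℝ) → S → A → ℝ)
    (hHtil : ∀ i Q s a, Htil i Q s a = if s ∈ C i then Hi i Q s a else Q s a)
    (Hhat : (S → A → ℝ) → S → A → ℝ)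
    (hHhat : ∀ Q s a, Hhat Q s a = (1 / (m : ℝ)) * ∑ i : Fin m, Htil i Q s a) :
    (∀ Q s a, Hhat Q s a = (1 - 1 / (m : ℝ)) * Q s a + (1 / (m : ℝ)) * H Q s a) ∧
    (∀ Q, Hhat Q = Q ↔ H Q = Q) := by
  have hm0 : (m : ℝ) ≠ 0 := by positivity
  -- For s ∈ C i, the local operator equals the global one
  have hloc : ∀ i : Fin m, ∀ s ∈ C i, ∀ Q a, Hi i Q s a = H Q s a := by
    intro i s hs Q a
    rw [hHi, hH]
    apply Finset.sum_subset (Finset.subset_univ _)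
    intro s' _ hs'
    have hzero : P s a s' = 0 := by
      have h0 : ∑ x ∈ Finset.univ \ Sh i, P s a x = 0 := by
        have := Finset.sum_sdiff_eq_sub (Finset.subset_univ (Sh i))
          (f := fun x => P s a x)
        rw [this, hP1, hhalo i s hs a]; ring
      have := (Finset.sum_eq_zero_iff_of_nonneg
        (fun x _ => hP0 s a x)).mp h0 s' (by simp [hs'])
      exact this
    simp [hzero]
  have key : ∀ Q s a, Hhat Q s a
      = (1 - 1 / (m : ℝ)) * Q s a + (1 / (m : ℝ)) * H Q s a := by
    intro Q s a
    obtain ⟨i₀, hi₀⟩ := hcover s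
    have hsum : ∑ i : Fin m, Htil i Q s a = (m - 1 : ℝ) * Q s a + H Q s a := by
      have heq : ∀ i : Fin m, Htil i Q s a
          = Q s a + (if i = i₀ then H Q s a - Q s a else 0) := by
        intro i
        rw [hHtil]
        by_cases h : i = i₀
        · subst h
          rw [if_pos hi₀, hloc i s hi₀ Q a, if_pos rfl]; ring
        · have hns : s ∉ C i := fun hsmem =>
            Finset.disjoint_left.mp (hdisj i i₀ h) hsmem hi₀
          simp [hns, h]
      rw [Finset.sum_congr rfl (fun i _ => heq i)]
      rw [Finset.sum_add_distrib, Finset.sum_ite_eq' Finset.univ i₀]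
      simp
      ring
    rw [hHhat, hsum]
    field_simp
  refine ⟨key, fun Q => ?_⟩
  constructor
  · intro h
    funext s a
    have h1 : Hhat Q s a = Q s a := by rw [h]
    rw [key] at h1
    have : (1 / (m : ℝ)) * (H Q s a - Q s a) = 0 := by linarith
    have h2 : H Q s a - Q s a = 0 := by
      rcases mul_eq_zero.mp this with h | h
      · exact absurd h (by simp [hm0])
      · exact h
    linarith
  · intro h
    funext s a
    rw [key, h]
    ring
end

section
/- Let (S, A, P, r, γ) be a finite discounted MDP with Bellman optimality operator H, and let C_1, …, C_m be a partition of S. Set D_i := C_i × A. Then H admits an exact strict decomposition with respect to the blocks D_1, …, D_m — i.e., there exist maps G_i : ℝ^{D_i} → ℝ^{D_i} such that (HQ)_{D_i} = G_i(Q_{D_i}) for every Q ∈ ℝ^{S×A} and every i — if and only if every component is dynamically closed, i.e., ∑_{s' ∈ C_i} P(s'|s,a) = 1 for all i ∈ {1,…,m}, all s ∈ C_i, and all a ∈ A. -/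
/-- **Strict decomposition of the Bellman operator requires dynamical closure.**
For a finite discounted MDP with Bellman optimality operator `H` and a partition
`C₁, …, Cₘ` of the state space, with blocks `Dᵢ = Cᵢ × A`, the operator `H` admits an
exact strict decomposition with respect to the blocks (i.e. there exist maps `Gᵢ` with
`(HQ)_{Dᵢ} = Gᵢ(Q_{Dᵢ})` for all `Q` and `i`) if and only if every component is
dynamically closed: `∑_{s' ∈ Cᵢ} P(s'|s,a) = 1` for all `i`, `s ∈ Cᵢ`, `a ∈ A`. -/
theorem strict_decomposition_bellman_iff_closed
    (S A : Type) [Fintype S] [Fintype A] [Nonempty S] [Nonempty A] [DecidableEq S]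
    (P : S → A → S → ℝ) (r : S → A → S → ℝ) (γ : ℝ)
    (hP0 : ∀ s a s', 0 ≤ P s a s') (hP1 : ∀ s a, ∑ s', P s a s' = 1)
    (hγ : 0 < γ ∧ γ < 1)
    (m : ℕ) (hm : 1 ≤ m)
    (C : Fin m → Finset S)
    (hdisj : ∀ i j : Fin m, i ≠ j → Disjoint (C i) (C j))
    (hcover : ∀ s : S, ∃ i : Fin m, s ∈ C i)
    (H : (S → A → ℝ) → S → A → ℝ)
    (hH : ∀ Q s a, H Q s a =
      ∑ s', P s a s' * (r s a s' + γ * Finset.univ.sup' Finset.univ_nonempty (Q s'))) :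
    (∃ G : ∀ i : Fin m, ({s : S // s ∈ C i} → A → ℝ) → ({s : S // s ∈ C i} → A → ℝ),
        ∀ (i : Fin m) (Q : S → A → ℝ) (s : {s : S // s ∈ C i}) (a : A),
          H Q s.1 a = G i (fun t b => Q t.1 b) s a)
      ↔ (∀ i : Fin m, ∀ s ∈ C i, ∀ a : A, ∑ s' ∈ C i, P s a s' = 1) := by
  constructor
  · rintro ⟨G, hG⟩ i s hs a
    by_contra hne
    -- the sum over C i is ≤ 1, hence < 1
    have hle : ∑ s' ∈ C i, P s a s' ≤ 1 := by
      rw [← hP1 s a]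
      exact Finset.sum_le_sum_of_subset_of_nonneg (Finset.subset_univ _)
        (fun x _ _ => hP0 s a x)
    have hlt : ∑ s' ∈ C i, P s a s' < 1 := lt_of_le_of_ne hle hne
    -- so some mass escapes C i
    have hsdiff : ∑ s' ∈ Finset.univ \ C i, P s a s' +
        ∑ s' ∈ C i, P s a s' = ∑ s', P s a s' :=
      Finset.sum_sdiff (Finset.subset_univ _)
    have hpos : 0 < ∑ s' ∈ Finset.univ \ C i, P s a s' := by
      rw [hP1 s a] at hsdiff; linarith
    obtain ⟨s₀, hs₀mem, hs₀pos⟩ :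
        ∃ s₀ ∈ Finset.univ \ C i, 0 < P s a s₀ := by
      by_contra hcon
      push_neg at hcon
      have : ∑ s' ∈ Finset.univ \ C i, P s a s' ≤ 0 :=
        Finset.sum_nonpos (fun x hx => hcon x hx)
      linarith
    have hs₀ : s₀ ∉ C i := (Finset.mem_sdiff.mp hs₀mem).2
    -- two Q's agreeing on C i
    set Q0 : S → A → ℝ := fun _ _ => 0 with hQ0
    set Q1 : S → A → ℝ := fun s' _ => if s' = s₀ then 1 else 0 with hQ1
    have hrestr : (fun (t : {s : S // s ∈ C i}) (b : A) => Q0 t.1 b)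
        = (fun t b => Q1 t.1 b) := by
      funext t b
      simp only [hQ0, hQ1]
      rw [if_neg]
      intro h
      exact hs₀ (h ▸ t.2)
    have heq : H Q0 s a = H Q1 s a := by
      rw [hG i Q0 ⟨s, hs⟩ a, hG i Q1 ⟨s, hs⟩ a, hrestr]
    have hsup0 : ∀ s' : S, Finset.univ.sup' Finset.univ_nonempty (Q0 s') = 0 := by
      intro s'; simp [hQ0]
    have hsup1 : ∀ s' : S, Finset.univ.sup' Finset.univ_nonempty (Q1 s')
        = if s' = s₀ then 1 else 0 := by
      intro s'; simp only [hQ1]; exact Finset.sup'_const _ _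
    have hexp : ∀ s' : S,
        P s a s' * (r s a s' + γ * (if s' = s₀ then (1:ℝ) else 0))
        = P s a s' * r s a s' + (if s' = s₀ then γ * P s a s' else 0) := by
      intro s'
      by_cases h : s' = s₀ <;> simp [h] <;> ring
    have h0 : H Q0 s a = ∑ s', P s a s' * r s a s' := by
      rw [hH]
      exact Finset.sum_congr rfl (fun s' _ => by rw [hsup0 s']; ring)
    have h1 : H Q1 s a = (∑ s', P s a s' * r s a s') + γ * P s a s₀ := by
      rw [hH]
      have step : H Q1 s a = ∑ s' : S,
          (P s a s' * r s a s' + (if s' = s₀ then γ * P s a s' else 0)) := by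
        rw [hH]
        exact Finset.sum_congr rfl (fun s' _ => by rw [hsup1 s']; exact hexp s')
      rw [hH] at step
      rw [step, Finset.sum_add_distrib,
        Finset.sum_ite_eq' Finset.univ s₀ (fun s' => γ * P s a s')]
      simp
    rw [h0, h1] at heq
    nlinarith [hγ.1]
  · intro hclosed
    refine ⟨fun i q t a => ∑ u ∈ (C i).attach,
      P t.1 a u.1 * (r t.1 a u.1 + γ * Finset.univ.sup' Finset.univ_nonempty (q u)),
      fun i Q t a => ?_⟩
    have hz : ∀ s' : S, s' ∉ C i → P t.1 a s' = 0 := by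
      intro s' hs'
      have hsdiff : ∑ u ∈ Finset.univ \ C i, P t.1 a u +
          ∑ u ∈ C i, P t.1 a u = ∑ u, P t.1 a u :=
        Finset.sum_sdiff (Finset.subset_univ _)
      rw [hP1 t.1 a, hclosed i t.1 t.2 a] at hsdiff
      have hzero : ∑ u ∈ Finset.univ \ C i, P t.1 a u = 0 := by linarith
      have := (Finset.sum_eq_zero_iff_of_nonneg
        (fun x _ => hP0 t.1 a x)).mp hzero
      exact this s' (Finset.mem_sdiff.mpr ⟨Finset.mem_univ _, hs'⟩)
    rw [hH]
    rw [← Finset.sum_subset (Finset.subset_univ (C i))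
      (fun x _ hx => by rw [hz x hx, zero_mul])]
    rw [← Finset.sum_attach (C i)
      (fun s' => P t.1 a s' * (r t.1 a s' + γ *
        Finset.univ.sup' Finset.univ_nonempty (Q s')))]
end

section
/- Under the stochastic approximation assumptions, let α ∈ (0,1] and x ∈ ℝ^d. Let i be drawn uniformly from {1,…,m} and ξ ∼ μ independently. Then E‖x + α(F_i(x,ξ) − x) − x*‖₂² ≤ ((1 − α(1−β))² + 2α²L²) ‖x − x*‖₂² + 2α²B². -/
open MeasureTheory

set_option maxHeartbeats 1000000 in
/-- **One-step recursion of single-agent stochastic approximation.**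
Under the stochastic approximation assumptions, for stepsize `α ∈ (0,1]` and any `x`,
the expectation over a uniformly random index `i` and an independent sample `ξ ∼ μ` of
`‖x + α(Fᵢ(x,ξ) − x) − x*‖²` is at most
`((1 − α(1−β))² + 2α²L²)‖x − x*‖² + 2α²B²`. -/
theorem sa_single_agent_one_step_recursion
    (d m : ℕ) (hd : 1 ≤ d) (hm : 1 ≤ m)
    (𝒳 : Type) [MeasurableSpace 𝒳] (μ : MeasureTheory.Measure 𝒳)
    [MeasureTheory.IsProbabilityMeasure μ]
    (F : Fin m → EuclideanSpace ℝ (Fin d) → 𝒳 → EuclideanSpace ℝ (Fin d))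
    (hInt : ∀ i x, MeasureTheory.Integrable (F i x) μ)
    (Fbari : Fin m → EuclideanSpace ℝ (Fin d) → EuclideanSpace ℝ (Fin d))
    (hFbari : ∀ i x, Fbari i x = ∫ ξ, F i x ξ ∂μ)
    (Fbar : EuclideanSpace ℝ (Fin d) → EuclideanSpace ℝ (Fin d))
    (hFbar : ∀ x, Fbar x = (m : ℝ)⁻¹ • ∑ i : Fin m, Fbari i x)
    (L : ℝ) (hL : 0 < L)
    (hLip : ∀ (i : Fin m) (x x' : EuclideanSpace ℝ (Fin d)) (ξ : 𝒳),
      ‖F i x ξ - F i x' ξ‖ ≤ L * ‖x - x'‖)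
    (hLip' : ∀ (i : Fin m) (x x' : EuclideanSpace ℝ (Fin d)) (ξ : 𝒳),
      ‖(F i x ξ - x) - (F i x' ξ - x')‖ ≤ L * ‖x - x'‖)
    (β : ℝ) (hβ : 0 < β ∧ β < 1)
    (hcontr : ∀ x x', ‖Fbar x - Fbar x'‖ ≤ β * ‖x - x'‖)
    (xstar : EuclideanSpace ℝ (Fin d)) (hfix : xstar = Fbar xstar)
    (B : ℝ) (hB : 0 < B)
    (hBd : ∀ (i : Fin m) (ξ : 𝒳), ‖F i xstar ξ‖ + ‖xstar‖ ≤ B)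
    (α : ℝ) (hα : 0 < α ∧ α ≤ 1)
    (x : EuclideanSpace ℝ (Fin d)) :
    (1 / (m : ℝ)) * ∑ i : Fin m, ∫ ξ, ‖x + α • (F i x ξ - x) - xstar‖ ^ 2 ∂μ
      ≤ ((1 - α * (1 - β)) ^ 2 + 2 * α ^ 2 * L ^ 2) * ‖x - xstar‖ ^ 2
        + 2 * α ^ 2 * B ^ 2 := by

  classical
  obtain ⟨hα0, hα1⟩ := hα
  obtain ⟨hβ0, hβ1⟩ := hβ
  have hm0 : (m:ℝ) ≠ 0 := Nat.cast_ne_zero.mpr (by omega)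
  have hmpos : (0:ℝ) < m := by positivity
  set z := x - xstar with hz
  set v := (1 - α) • z with hv
  set C : ℝ := L * ‖z‖ + B with hC
  have hC0 : 0 ≤ C := by positivity
  set K : ℝ := α^2 * (2*L^2*‖z‖^2 + 2*B^2) with hK
  -- pointwise bound on ‖F i x ξ - xstar‖
  have hFb : ∀ (i : Fin m) (ξ : 𝒳), ‖F i x ξ - xstar‖ ≤ C := by
    intro i ξ
    have e : F i x ξ - xstar = (F i x ξ - F i xstar ξ) + (F i xstar ξ - xstar) := by abel
    calc ‖F i x ξ - xstar‖ ≤ ‖F i x ξ - F i xstar ξ‖ + ‖F i xstar ξ - xstar‖ := by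
          rw [e]; exact norm_add_le _ _
      _ ≤ L * ‖z‖ + B := by
          have h1 := hLip i x xstar ξ
          have h2 : ‖F i xstar ξ - xstar‖ ≤ B :=
            le_trans (norm_sub_le _ _) (hBd i ξ)
          rw [hz]; linarith
  have hKC : α^2 * C^2 ≤ K := by
    rw [hK, hC]
    nlinarith [sq_nonneg (L * ‖z‖ - B), sq_nonneg α]
  -- key per-i bound
  have key : ∀ i : Fin m, ∫ ξ, ‖x + α • (F i x ξ - x) - xstar‖ ^ 2 ∂μ
      ≤ ‖v‖^2 + K + 2 * inner ℝ v (α • (Fbari i x - xstar)) := by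
    intro i
    have hrw : ∀ ξ, x + α • (F i x ξ - x) - xstar = v + α • (F i x ξ - xstar) := by
      intro ξ; rw [hv, hz]; module
    have hpt : ∀ ξ, ‖x + α • (F i x ξ - x) - xstar‖^2
        ≤ ‖v‖^2 + K + 2 * inner ℝ v (α • (F i x ξ - xstar)) := by
      intro ξ
      rw [hrw ξ, norm_add_sq_real]
      have h1 : ‖α • (F i x ξ - xstar)‖^2 ≤ K := by
        rw [norm_smul, Real.norm_eq_abs, abs_of_pos hα0, mul_pow]
        have := hFb i ξ
        have hn : (0:ℝ) ≤ ‖F i x ξ - xstar‖ := norm_nonneg _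
        have h0 : ‖F i x ξ - xstar‖^2 ≤ C^2 := pow_le_pow_left₀ hn this 2
        have := mul_le_mul_of_nonneg_left h0 (sq_nonneg α)
        linarith
      linarith
    -- integrability
    have hmeasF : AEStronglyMeasurable (fun ξ => F i x ξ - xstar) μ :=
      (hInt i x).aestronglyMeasurable.sub aestronglyMeasurable_const
    have hIntw : Integrable (fun ξ => α • (F i x ξ - xstar)) μ :=
      ((hInt i x).sub (integrable_const xstar)).smul α
    have hIntInner : Integrable (fun ξ => inner ℝ v (α • (F i x ξ - xstar)) : 𝒳 → ℝ) μ :=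
      hIntw.const_inner v
    have hIntRHS : Integrable
        (fun ξ => ‖v‖^2 + K + 2 * inner ℝ v (α • (F i x ξ - xstar)) : 𝒳 → ℝ) μ :=
      (integrable_const _).add (hIntInner.const_mul 2)
    have hmeasL : AEStronglyMeasurable
        (fun ξ => ‖x + α • (F i x ξ - x) - xstar‖^2 : 𝒳 → ℝ) μ := by
      have : AEStronglyMeasurable (fun ξ => v + α • (F i x ξ - xstar)) μ :=
        (hmeasF.const_smul α).const_add v
      have h2 : AEStronglyMeasurable (fun ξ => ‖v + α • (F i x ξ - xstar)‖^2 : 𝒳 → ℝ) μ :=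
        this.norm.pow 2
      refine h2.congr (Filter.Eventually.of_forall fun ξ => ?_)
      show ‖v + α • (F i x ξ - xstar)‖^2 = ‖x + α • (F i x ξ - x) - xstar‖^2
      rw [hrw ξ]
    have hIntL : Integrable (fun ξ => ‖x + α • (F i x ξ - x) - xstar‖^2 : 𝒳 → ℝ) μ := by
      refine (integrable_const ((‖v‖ + α * C)^2)).mono' hmeasL
        (Filter.Eventually.of_forall fun ξ => ?_)
      rw [Real.norm_eq_abs, abs_of_nonneg (by positivity), hrw ξ]
      have hb : ‖v + α • (F i x ξ - xstar)‖ ≤ ‖v‖ + α * C := by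
        refine le_trans (norm_add_le _ _) ?_
        have : ‖α • (F i x ξ - xstar)‖ ≤ α * C := by
          rw [norm_smul, Real.norm_eq_abs, abs_of_pos hα0]
          exact mul_le_mul_of_nonneg_left (hFb i ξ) hα0.le
        linarith
      have := norm_nonneg (v + α • (F i x ξ - xstar))
      nlinarith
    calc ∫ ξ, ‖x + α • (F i x ξ - x) - xstar‖ ^ 2 ∂μ
        ≤ ∫ ξ, (‖v‖^2 + K + 2 * inner ℝ v (α • (F i x ξ - xstar))) ∂μ :=
          integral_mono hIntL hIntRHS hpt
      _ = ‖v‖^2 + K + 2 * inner ℝ v (α • (Fbari i x - xstar)) := by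
          rw [integral_add (integrable_const _) (hIntInner.const_mul 2),
            integral_const, integral_const_mul, integral_inner hIntw, probReal_univ,
            smul_eq_mul, one_mul]
          congr 2
          rw [integral_smul, integral_sub (hInt i x) (integrable_const xstar),
            integral_const, probReal_univ, one_smul, ← hFbari]
  -- sum up
  have hsum : (1 / (m : ℝ)) * ∑ i : Fin m, ∫ ξ, ‖x + α • (F i x ξ - x) - xstar‖ ^ 2 ∂μ
      ≤ ‖v‖^2 + K + 2 * inner ℝ v (α • (Fbar x - xstar)) := by
    have h1 : ∑ i : Fin m, ∫ ξ, ‖x + α • (F i x ξ - x) - xstar‖ ^ 2 ∂μ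
        ≤ ∑ i : Fin m, (‖v‖^2 + K + 2 * inner ℝ v (α • (Fbari i x - xstar))) :=
      Finset.sum_le_sum fun i _ => key i
    have h2 : ∑ i : Fin m, (‖v‖^2 + K + 2 * inner ℝ v (α • (Fbari i x - xstar)) : ℝ)
        = (m:ℝ) * (‖v‖^2 + K + 2 * inner ℝ v (α • (Fbar x - xstar))) := by
      have e : ∀ i : Fin m, (inner ℝ v (α • (Fbari i x - xstar)) : ℝ)
          = α * inner ℝ v (Fbari i x) - α * inner ℝ v xstar := by
        intro i
        rw [real_inner_smul_right, inner_sub_right]; ring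
      have eF : (inner ℝ v (α • (Fbar x - xstar)) : ℝ)
          = α * inner ℝ v (Fbar x) - α * inner ℝ v xstar := by
        rw [real_inner_smul_right, inner_sub_right]; ring
      have hS : ∑ i : Fin m, (inner ℝ v (Fbari i x) : ℝ) = (m:ℝ) * inner ℝ v (Fbar x) := by
        rw [hFbar x, real_inner_smul_right, ← mul_assoc, mul_inv_cancel₀ hm0, one_mul,
          inner_sum]
      calc ∑ i : Fin m, (‖v‖^2 + K + 2 * inner ℝ v (α • (Fbari i x - xstar)) : ℝ)
          = ∑ i : Fin m, ((‖v‖^2 + K - 2 * (α * inner ℝ v xstar))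
              + 2 * α * inner ℝ v (Fbari i x)) :=
            Finset.sum_congr rfl (fun i _ => by rw [e i]; ring)
        _ = (m:ℝ) * (‖v‖^2 + K - 2 * (α * inner ℝ v xstar))
              + 2 * α * ((m:ℝ) * inner ℝ v (Fbar x)) := by
            rw [Finset.sum_add_distrib, Finset.sum_const, Finset.card_univ,
              Fintype.card_fin, nsmul_eq_mul, ← Finset.mul_sum, hS]
        _ = (m:ℝ) * (‖v‖^2 + K + 2 * inner ℝ v (α • (Fbar x - xstar))) := by
            rw [eF]; ring
    calc (1 / (m : ℝ)) * ∑ i : Fin m, ∫ ξ, ‖x + α • (F i x ξ - x) - xstar‖ ^ 2 ∂μ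
        ≤ (1 / (m : ℝ)) * ((m:ℝ) * (‖v‖^2 + K + 2 * inner ℝ v (α • (Fbar x - xstar)))) := by
          rw [← h2]
          exact mul_le_mul_of_nonneg_left h1 (by positivity)
      _ = ‖v‖^2 + K + 2 * inner ℝ v (α • (Fbar x - xstar)) := by
          rw [← mul_assoc, one_div, inv_mul_cancel₀ hm0, one_mul]
  -- bound the inner product
  have hinner : (inner ℝ v (α • (Fbar x - xstar)) : ℝ) ≤ α * (1 - α) * (β * ‖z‖^2) := by
    have e : (inner ℝ v (α • (Fbar x - xstar)) : ℝ)
        = α * (1 - α) * inner ℝ z (Fbar x - Fbar xstar) := by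
      rw [hv, real_inner_smul_right, real_inner_smul_left, ← hfix]; ring
    rw [e]
    have hcs : (inner ℝ z (Fbar x - Fbar xstar) : ℝ) ≤ ‖z‖ * ‖Fbar x - Fbar xstar‖ :=
      real_inner_le_norm _ _
    have hc : ‖Fbar x - Fbar xstar‖ ≤ β * ‖z‖ := by rw [hz]; exact hcontr x xstar
    have : (inner ℝ z (Fbar x - Fbar xstar) : ℝ) ≤ β * ‖z‖^2 := by
      nlinarith [norm_nonneg z, norm_nonneg (Fbar x - Fbar xstar)]
    nlinarith [mul_nonneg hα0.le (sub_nonneg.mpr hα1)]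
  -- final arithmetic
  have hnv : ‖v‖^2 = (1-α)^2 * ‖z‖^2 := by
    rw [hv, norm_smul, Real.norm_eq_abs, abs_of_nonneg (by linarith), mul_pow]
  have hzx : ‖x - xstar‖ = ‖z‖ := by rw [hz]
  rw [hzx]
  calc (1 / (m : ℝ)) * ∑ i : Fin m, ∫ ξ, ‖x + α • (F i x ξ - x) - xstar‖ ^ 2 ∂μ
      ≤ ‖v‖^2 + K + 2 * inner ℝ v (α • (Fbar x - xstar)) := hsum
    _ ≤ (1-α)^2 * ‖z‖^2 + K + 2 * (α * (1 - α) * (β * ‖z‖^2)) := by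
        rw [hnv]; linarith
    _ ≤ ((1 - α * (1 - β)) ^ 2 + 2 * α ^ 2 * L ^ 2) * ‖z‖ ^ 2 + 2 * α ^ 2 * B ^ 2 := by
        rw [hK]
        nlinarith [sq_nonneg (α * β * ‖z‖), sq_nonneg ‖z‖]
end

section
/- Under the stochastic approximation assumptions and with a gossip matrix W, let α ∈ (0,1], ν > 0, and X = (x_1,…,x_m) ∈ (ℝ^d)^m. Perform one decentralized stochastic approximation step with fresh i.i.d. samples ξ_1,…,ξ_m ∼ μ. Then, writing q₂ := 1 − α(1−β), E‖x̄⁺ − x*‖₂² ≤ ((1+ν) q₂² + 4α²L²/m) ‖x̄ − x*‖₂² + ((1 + 1/ν) α²L²/m + 2α²L²/m²) ‖(I−J)X‖_F² + 4α²B²/m. -/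
open MeasureTheory

/-! ### Auxiliary lemmas -/

lemma dsa_coord_abs_le_norm {d : ℕ} (v : EuclideanSpace ℝ (Fin d)) (t : Fin d) :
    |v t| ≤ ‖v‖ := by
  rw [EuclideanSpace.norm_eq, ← Real.sqrt_sq_eq_abs]
  apply Real.sqrt_le_sqrt
  simpa [sq_abs] using Finset.single_le_sum (f := fun i => |v i| ^ 2)
    (fun i _ => sq_nonneg _) (Finset.mem_univ t)

lemma dsa_young_sq {E : Type*} [NormedAddCommGroup E] [InnerProductSpace ℝ E]
    (a b : E) {ν : ℝ} (hν : 0 < ν) :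
    ‖a + b‖ ^ 2 ≤ (1 + ν) * ‖a‖ ^ 2 + (1 + 1 / ν) * ‖b‖ ^ 2 := by
  rw [norm_add_sq_real]
  have h1 : (inner ℝ a b : ℝ) ≤ ‖a‖ * ‖b‖ := real_inner_le_norm a b
  have h2 : 2 * (‖a‖ * ‖b‖) ≤ ν * ‖a‖ ^ 2 + (1 / ν) * ‖b‖ ^ 2 := by
    rw [div_mul_eq_mul_div, one_mul, ← sub_nonneg]
    have e : ν * ‖a‖ ^ 2 + ‖b‖ ^ 2 / ν - 2 * (‖a‖ * ‖b‖) = (ν * ‖a‖ - ‖b‖) ^ 2 / ν := by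
      field_simp; ring
    rw [e]; positivity
  nlinarith

lemma dsa_sum_sq_decomp {E : Type*} [NormedAddCommGroup E] [InnerProductSpace ℝ E]
    {ι : Type*} (s : Finset ι) (X : ι → E) (c y : E)
    (hc : ∑ i ∈ s, (X i - c) = 0) :
    ∑ i ∈ s, ‖X i - y‖ ^ 2 = ∑ i ∈ s, ‖X i - c‖ ^ 2 + s.card * ‖c - y‖ ^ 2 := by
  have e : ∀ i, ‖X i - y‖ ^ 2
      = ‖X i - c‖ ^ 2 + 2 * (inner ℝ (X i - c) (c - y) : ℝ) + ‖c - y‖ ^ 2 := by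
    intro i
    rw [show X i - y = (X i - c) + (c - y) by abel, norm_add_sq_real]
  simp_rw [e]
  rw [Finset.sum_add_distrib, Finset.sum_add_distrib, ← Finset.mul_sum, ← sum_inner, hc]
  simp [mul_comm]

section Aux
variable {𝒳 : Type} [MeasurableSpace 𝒳] (μ : Measure 𝒳) [IsProbabilityMeasure μ] {m : ℕ}

lemma dsa_norm_integral_le_of_bound {E : Type*} [NormedAddCommGroup E] [NormedSpace ℝ E]
    {f : 𝒳 → E} (hf : Integrable f μ) {K : ℝ} (h : ∀ x, ‖f x‖ ≤ K) :
    ‖∫ x, f x ∂μ‖ ≤ K := by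
  calc ‖∫ x, f x ∂μ‖ ≤ ∫ x, ‖f x‖ ∂μ := norm_integral_le_integral_norm _
    _ ≤ ∫ _x, K ∂μ := integral_mono hf.norm (integrable_const K) h
    _ = K := by simp

lemma dsa_variance_le {E : Type*} [NormedAddCommGroup E] [InnerProductSpace ℝ E]
    [CompleteSpace E] {f : 𝒳 → E} (hf : Integrable f μ) {K : ℝ} (hK : 0 ≤ K)
    (h : ∀ x, ‖f x‖ ≤ K) :
    ∫ x, ‖f x - ∫ y, f y ∂μ‖ ^ 2 ∂μ ≤ K ^ 2 := by
  set c := ∫ y, f y ∂μ with hc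
  have e : ∀ x, ‖f x - c‖ ^ 2
      = ‖f x‖ ^ 2 - 2 * (inner ℝ c (f x) : ℝ) + ‖c‖ ^ 2 := by
    intro x
    rw [norm_sub_sq_real, real_inner_comm]
  have Ia : Integrable (fun x => ‖f x‖ ^ 2) μ := by
    refine (integrable_const (K ^ 2)).mono'
      ?_ (Filter.Eventually.of_forall fun x => ?_)
    · exact (continuous_pow 2).comp_aestronglyMeasurable hf.aestronglyMeasurable.norm
    · have h0 := norm_nonneg (f x)
      have h1 := h x
      have h2 : (0:ℝ) ≤ ‖f x‖ ^ 2 := sq_nonneg _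
      rw [Real.norm_eq_abs, abs_of_nonneg h2]
      nlinarith
  have Ib : Integrable (fun x => (inner ℝ c (f x) : ℝ)) μ := by
    refine (integrable_const (‖c‖ * K)).mono'
      (aestronglyMeasurable_const.inner hf.aestronglyMeasurable)
      (Filter.Eventually.of_forall fun x => ?_)
    calc ‖(inner ℝ c (f x) : ℝ)‖ = |(inner ℝ c (f x) : ℝ)| := rfl
      _ ≤ ‖c‖ * ‖f x‖ := abs_real_inner_le_norm _ _
      _ ≤ ‖c‖ * K := mul_le_mul_of_nonneg_left (h x) (norm_nonneg c)
  have Ib2 : Integrable (fun x => 2 * (inner ℝ c (f x) : ℝ)) μ := Ib.const_mul 2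
  calc ∫ x, ‖f x - c‖ ^ 2 ∂μ
      = ∫ x, (‖f x‖ ^ 2 - 2 * (inner ℝ c (f x) : ℝ) + ‖c‖ ^ 2) ∂μ := by simp_rw [e]
    _ = (∫ x, (‖f x‖ ^ 2 - 2 * (inner ℝ c (f x) : ℝ)) ∂μ) + ‖c‖ ^ 2 := by
        have Is : Integrable (fun x => ‖f x‖ ^ 2 - 2 * (inner ℝ c (f x) : ℝ)) μ := Ia.sub Ib2
        rw [integral_add Is (integrable_const _)]
        simp
    _ = (∫ x, ‖f x‖ ^ 2 ∂μ) - 2 * (inner ℝ c c : ℝ) + ‖c‖ ^ 2 := by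
        rw [integral_sub Ia Ib2, integral_const_mul, integral_inner hf, ← hc]
    _ = (∫ x, ‖f x‖ ^ 2 ∂μ) - ‖c‖ ^ 2 := by
        rw [real_inner_self_eq_norm_sq]; ring
    _ ≤ ∫ x, ‖f x‖ ^ 2 ∂μ := by
        have := sq_nonneg ‖c‖; linarith
    _ ≤ ∫ _x, K ^ 2 ∂μ := by
        refine integral_mono Ia (integrable_const _) fun x => ?_
        have h0 := norm_nonneg (f x)
        nlinarith [h x]
    _ = K ^ 2 := by simp

lemma dsa_pi_integral_eval (j : Fin m) (g : 𝒳 → ℝ) :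
    ∫ ξ : Fin m → 𝒳, g (ξ j) ∂(Measure.pi fun _ => μ) = ∫ x, g x ∂μ := by
  letI : MeasureSpace 𝒳 := ⟨μ⟩
  have h := MeasureTheory.integral_fintype_prod_eq_prod (𝕜 := ℝ) (ι := Fin m)
    (fun i => fun x => if i = j then g x else (1:ℝ)) (μ := fun _ => μ)
  have e1 : ∀ i : Fin m, (∫ x : 𝒳, (if i = j then g x else (1:ℝ)) ∂μ)
      = if i = j then ∫ x, g x ∂μ else 1 := by
    intro i; split <;> simp
  rw [Finset.prod_congr rfl (fun i _ => e1 i)] at h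
  simpa using h

lemma dsa_pi_integral_eval_pair {j k : Fin m} (hjk : j ≠ k) (g h : 𝒳 → ℝ) :
    ∫ ξ : Fin m → 𝒳, g (ξ j) * h (ξ k) ∂(Measure.pi fun _ => μ)
      = (∫ x, g x ∂μ) * ∫ x, h x ∂μ := by
  letI : MeasureSpace 𝒳 := ⟨μ⟩
  have h' := MeasureTheory.integral_fintype_prod_eq_prod (𝕜 := ℝ) (ι := Fin m)
    (fun i => fun x => (if i = j then g x else 1) * (if i = k then h x else 1)) (μ := fun _ => μ)
  have e1 : ∀ i : Fin m, (∫ x : 𝒳, (if i = j then g x else 1) * (if i = k then h x else 1) ∂μ)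
      = if i = j then ∫ x, g x ∂μ else if i = k then ∫ x, h x ∂μ else 1 := by
    intro i
    rcases eq_or_ne i j with rfl | hij
    · simp [if_neg hjk]
    · rcases eq_or_ne i k with rfl | hik
      · simp [hij]
      · simp [hij, hik]
  have e2 : ∀ ξ : Fin m → 𝒳,
      (∏ i, (if i = j then g (ξ i) else 1) * (if i = k then h (ξ i) else 1))
        = g (ξ j) * h (ξ k) := by
    intro ξ
    rw [Finset.prod_mul_distrib]
    simp
  calc ∫ ξ : Fin m → 𝒳, g (ξ j) * h (ξ k) ∂(Measure.pi fun _ => μ)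
      = ∫ ξ : Fin m → 𝒳, ∏ i, (if i = j then g (ξ i) else 1) * (if i = k then h (ξ i) else 1)
        ∂(Measure.pi fun _ => μ) := by simp only [e2]
    _ = ∏ i : Fin m, if i = j then ∫ x, g x ∂μ else if i = k then ∫ x, h x ∂μ else 1 := by
        rw [h']; exact Finset.prod_congr rfl (fun i _ => e1 i)
    _ = (∫ x, g x ∂μ) * ∫ x, h x ∂μ := by
        rw [Finset.prod_eq_mul_prod_sdiff_singleton_of_mem (Finset.mem_univ j), if_pos rfl]
        rw [Finset.prod_eq_mul_prod_sdiff_singleton_of_mem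
          (show k ∈ Finset.univ \ {j} by simp [hjk.symm]), if_neg hjk.symm, if_pos rfl]
        rw [Finset.prod_eq_one, mul_one]
        intro i hi
        simp only [Finset.mem_sdiff, Finset.mem_singleton] at hi
        rw [if_neg hi.1.2, if_neg hi.2]

lemma dsa_aesm_eval {E' : Type*} [TopologicalSpace E'] {f : 𝒳 → E'}
    (hf : AEStronglyMeasurable f μ) (j : Fin m) :
    AEStronglyMeasurable (fun ξ : Fin m → 𝒳 => f (ξ j)) (Measure.pi fun _ => μ) := by
  haveI : ∀ i : Fin m, SigmaFinite ((fun _ : Fin m => μ) i) := fun _ => inferInstance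
  obtain ⟨g, hgm, hfg⟩ := hf
  refine ⟨fun ξ => g (ξ j), hgm.comp_measurable (measurable_pi_apply j), ?_⟩
  exact hfg.comp_tendsto (MeasureTheory.Measure.tendsto_eval_ae_ae (μ := fun _ : Fin m => μ))

lemma dsa_expected_sq_norm {d : ℕ} (n : Fin m → 𝒳 → EuclideanSpace ℝ (Fin d))
    (hint : ∀ j, Integrable (n j) μ)
    (hzero : ∀ j, ∫ x, n j x ∂μ = 0)
    {C : ℝ} (hC : 0 ≤ C) (hb : ∀ j x, ‖n j x‖ ≤ C)
    (D : EuclideanSpace ℝ (Fin d)) (c : ℝ) :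
    ∫ ξ : Fin m → 𝒳, ‖D + c • ∑ j, n j (ξ j)‖ ^ 2 ∂(Measure.pi fun _ => μ)
      = ‖D‖ ^ 2 + c ^ 2 * ∑ j, ∫ x, ‖n j x‖ ^ 2 ∂μ := by
  set π := (Measure.pi fun _ : Fin m => μ) with hπ
  haveI : IsProbabilityMeasure π := by rw [hπ]; infer_instance
  have haesm : ∀ j, AEStronglyMeasurable (fun ξ : Fin m → 𝒳 => n j (ξ j)) π :=
    fun j => dsa_aesm_eval μ (hint j).aestronglyMeasurable j
  have intb : ∀ (f : (Fin m → 𝒳) → ℝ) (K : ℝ), AEStronglyMeasurable f π →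
      (∀ ξ, |f ξ| ≤ K) → Integrable f π := by
    intro f K hf hK
    exact (integrable_const K).mono' hf (Filter.Eventually.of_forall
      (fun ξ => by simpa [Real.norm_eq_abs] using hK ξ))
  have hpt : ∀ ξ : Fin m → 𝒳,
      ‖D + c • ∑ j, n j (ξ j)‖ ^ 2
        = ‖D‖ ^ 2 + (2 * c) * ∑ j, (inner ℝ D (n j (ξ j)) : ℝ)
          + c ^ 2 * ∑ j, ∑ k, (inner ℝ (n j (ξ j)) (n k (ξ k)) : ℝ) := by
    intro ξ
    have e2 : ‖∑ j, n j (ξ j)‖ ^ 2 = ∑ j, ∑ k, (inner ℝ (n j (ξ j)) (n k (ξ k)) : ℝ) := by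
      rw [← real_inner_self_eq_norm_sq, sum_inner]
      exact Finset.sum_congr rfl fun j _ => inner_sum _ _ _
    rw [norm_add_sq_real, inner_smul_right, norm_smul, inner_sum, mul_pow, ← e2]
    simp [sq_abs]
    ring
  simp_rw [hpt]
  have hint1 : ∀ j, Integrable (fun ξ : Fin m → 𝒳 => (inner ℝ D (n j (ξ j)) : ℝ)) π := by
    intro j
    refine intb _ (‖D‖ * C) (aestronglyMeasurable_const.inner (haesm j)) fun ξ => ?_
    calc |(inner ℝ D (n j (ξ j)) : ℝ)| ≤ ‖D‖ * ‖n j (ξ j)‖ := abs_real_inner_le_norm _ _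
      _ ≤ ‖D‖ * C := mul_le_mul_of_nonneg_left (hb j (ξ j)) (norm_nonneg D)
  have hint2 : ∀ j k : Fin m,
      Integrable (fun ξ : Fin m → 𝒳 => (inner ℝ (n j (ξ j)) (n k (ξ k)) : ℝ)) π := by
    intro j k
    refine intb _ (C * C) ((haesm j).inner (haesm k)) fun ξ => ?_
    calc |(inner ℝ (n j (ξ j)) (n k (ξ k)) : ℝ)| ≤ ‖n j (ξ j)‖ * ‖n k (ξ k)‖ :=
          abs_real_inner_le_norm _ _
      _ ≤ C * C := mul_le_mul (hb _ _) (hb _ _) (norm_nonneg _) hC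
  have I1 : Integrable (fun ξ : Fin m → 𝒳 =>
      (2 * c) * ∑ j, (inner ℝ D (n j (ξ j)) : ℝ)) π :=
    (integrable_finset_sum _ (fun j _ => hint1 j)).const_mul _
  have I2 : Integrable (fun ξ : Fin m → 𝒳 =>
      c ^ 2 * ∑ j, ∑ k, (inner ℝ (n j (ξ j)) (n k (ξ k)) : ℝ)) π :=
    (integrable_finset_sum _ (fun j _ =>
      integrable_finset_sum _ (fun k _ => hint2 j k))).const_mul _
  have Ia : Integrable (fun ξ : Fin m → 𝒳 =>
      ‖D‖ ^ 2 + (2 * c) * ∑ j, (inner ℝ D (n j (ξ j)) : ℝ)) π :=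
    (integrable_const _).add I1
  have Ic : Integrable (fun _ : Fin m → 𝒳 => ‖D‖ ^ 2) π := integrable_const _
  rw [integral_add Ia I2, integral_add Ic I1,
    integral_const, integral_const_mul, integral_const_mul,
    integral_finset_sum _ (fun j _ => hint1 j),
    integral_finset_sum _ (fun j _ => integrable_finset_sum _ (fun k _ => hint2 j k))]
  have hz1 : ∀ j, ∫ ξ : Fin m → 𝒳, (inner ℝ D (n j (ξ j)) : ℝ) ∂π = 0 := by
    intro j
    rw [hπ, dsa_pi_integral_eval μ j (fun x => (inner ℝ D (n j x) : ℝ)),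
      integral_inner (hint j), hzero j, inner_zero_right]
  have hz2 : ∀ j k : Fin m, j ≠ k →
      ∫ ξ : Fin m → 𝒳, (inner ℝ (n j (ξ j)) (n k (ξ k)) : ℝ) ∂π = 0 := by
    intro j k hjk
    have ecoord : ∀ (ξ : Fin m → 𝒳), (inner ℝ (n j (ξ j)) (n k (ξ k)) : ℝ)
        = ∑ t, (n j (ξ j)) t * (n k (ξ k)) t := by
      intro ξ
      rw [PiLp.inner_apply]
      simp [RCLike.inner_apply, mul_comm]
    simp_rw [ecoord]
    have hprodint : ∀ t : Fin d,
        Integrable (fun ξ : Fin m → 𝒳 => n j (ξ j) t * n k (ξ k) t) π := by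
      intro t
      have ha : AEStronglyMeasurable (fun ξ : Fin m → 𝒳 => n j (ξ j) t * n k (ξ k) t) π :=
        AEStronglyMeasurable.mul
          ((EuclideanSpace.proj t).continuous.comp_aestronglyMeasurable (haesm j))
          ((EuclideanSpace.proj t).continuous.comp_aestronglyMeasurable (haesm k))
      refine intb _ (C * C) ha fun ξ => ?_
      rw [abs_mul]
      exact mul_le_mul ((dsa_coord_abs_le_norm _ _).trans (hb _ _))
        ((dsa_coord_abs_le_norm _ _).trans (hb _ _)) (abs_nonneg _) hC
    rw [integral_finset_sum _ (fun t _ => hprodint t)]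
    refine Finset.sum_eq_zero fun t _ => ?_
    rw [hπ, dsa_pi_integral_eval_pair μ hjk (fun x => n j x t) (fun x => n k x t)]
    have hzc : ∀ l : Fin m, ∫ x, n l x t ∂μ = 0 := by
      intro l
      have e : ∀ x, n l x t = (inner ℝ (EuclideanSpace.single t (1:ℝ)) (n l x) : ℝ) := by
        intro x; rw [EuclideanSpace.inner_single_left]; simp
      simp_rw [e]
      rw [integral_inner (hint l), hzero l, inner_zero_right]
    rw [hzc j, hzc k, zero_mul]
  have hdiag : ∀ j : Fin m, ∫ ξ : Fin m → 𝒳, (inner ℝ (n j (ξ j)) (n j (ξ j)) : ℝ) ∂π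
      = ∫ x, ‖n j x‖ ^ 2 ∂μ := by
    intro j
    have e : ∀ ξ : Fin m → 𝒳, (inner ℝ (n j (ξ j)) (n j (ξ j)) : ℝ) = ‖n j (ξ j)‖ ^ 2 :=
      fun ξ => real_inner_self_eq_norm_sq _
    simp_rw [e]
    rw [hπ, dsa_pi_integral_eval μ j (fun x => ‖n j x‖ ^ 2)]
  have hrow : ∀ j : Fin m, ∑ k, ∫ ξ : Fin m → 𝒳, (inner ℝ (n j (ξ j)) (n k (ξ k)) : ℝ) ∂π
      = ∫ x, ‖n j x‖ ^ 2 ∂μ := by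
    intro j
    rw [Finset.sum_eq_single j]
    · exact hdiag j
    · intro k _ hkj; exact hz2 j k (Ne.symm hkj)
    · intro h; exact absurd (Finset.mem_univ j) h
  have hzsum : ∑ j, ∫ ξ : Fin m → 𝒳, (inner ℝ D (n j (ξ j)) : ℝ) ∂π = 0 :=
    Finset.sum_eq_zero fun j _ => hz1 j
  have hrowsum : ∑ j, ∫ ξ : Fin m → 𝒳, ∑ k, (inner ℝ (n j (ξ j)) (n k (ξ k)) : ℝ) ∂π
      = ∑ j, ∫ x, ‖n j x‖ ^ 2 ∂μ := by
    refine Finset.sum_congr rfl fun j _ => ?_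
    rw [integral_finset_sum _ (fun k _ => hint2 j k), hrow j]
  rw [hzsum, hrowsum]
  simp

end Aux
set_option maxHeartbeats 2000000 in
/-- **One-step recursion for the network average of decentralized SA.**
One decentralized stochastic approximation step with gossip matrix `W`, stepsize
`α ∈ (0,1]` and fresh i.i.d. samples `ξ₁,…,ξₘ ∼ μ` satisfies, with `q₂ = 1 − α(1−β)`,
`E‖x̄⁺ − x*‖² ≤ ((1+ν)q₂² + 4α²L²/m)‖x̄ − x*‖²
  + ((1 + 1/ν)α²L²/m + 2α²L²/m²)‖(I−J)X‖_F² + 4α²B²/m`. -/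
theorem dsa_average_one_step_recursion
    (d m : ℕ) (hd : 1 ≤ d) (hm : 1 ≤ m)
    (𝒳 : Type) [MeasurableSpace 𝒳] (μ : MeasureTheory.Measure 𝒳)
    [MeasureTheory.IsProbabilityMeasure μ]
    (F : Fin m → EuclideanSpace ℝ (Fin d) → 𝒳 → EuclideanSpace ℝ (Fin d))
    (hInt : ∀ i x, MeasureTheory.Integrable (F i x) μ)
    (Fbari : Fin m → EuclideanSpace ℝ (Fin d) → EuclideanSpace ℝ (Fin d))
    (hFbari : ∀ i x, Fbari i x = ∫ ξ, F i x ξ ∂μ)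
    (Fbar : EuclideanSpace ℝ (Fin d) → EuclideanSpace ℝ (Fin d))
    (hFbar : ∀ x, Fbar x = (m : ℝ)⁻¹ • ∑ i : Fin m, Fbari i x)
    (L : ℝ) (hL : 0 < L)
    (hLip : ∀ (i : Fin m) (x x' : EuclideanSpace ℝ (Fin d)) (ξ : 𝒳),
      ‖F i x ξ - F i x' ξ‖ ≤ L * ‖x - x'‖)
    (hLip' : ∀ (i : Fin m) (x x' : EuclideanSpace ℝ (Fin d)) (ξ : 𝒳),
      ‖(F i x ξ - x) - (F i x' ξ - x')‖ ≤ L * ‖x - x'‖)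
    (β : ℝ) (hβ : 0 < β ∧ β < 1)
    (hcontr : ∀ x x', ‖Fbar x - Fbar x'‖ ≤ β * ‖x - x'‖)
    (xstar : EuclideanSpace ℝ (Fin d)) (hfix : xstar = Fbar xstar)
    (B : ℝ) (hB : 0 < B)
    (hBd : ∀ (i : Fin m) (ξ : 𝒳), ‖F i xstar ξ‖ + ‖xstar‖ ≤ B)
    (α : ℝ) (hα : 0 < α ∧ α ≤ 1) (ν : ℝ) (hν : 0 < ν)
    (W : Matrix (Fin m) (Fin m) ℝ)
    (hW0 : ∀ i j, 0 ≤ W i j) (hWsym : ∀ i j, W i j = W j i)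
    (hWrow : ∀ i, ∑ j : Fin m, W i j = 1)
    (X : Fin m → EuclideanSpace ℝ (Fin d))
    (xbar : EuclideanSpace ℝ (Fin d)) (hxbar : xbar = (m : ℝ)⁻¹ • ∑ i : Fin m, X i)
    (step : (Fin m → 𝒳) → Fin m → EuclideanSpace ℝ (Fin d))
    (hstep : ∀ (ξ : Fin m → 𝒳) (i : Fin m),
      step ξ i = ∑ j : Fin m, W i j • (X j + α • (F j (X j) (ξ j) - X j)))
    :
    ∫ ξ, ‖(m : ℝ)⁻¹ • ∑ i : Fin m, step ξ i - xstar‖ ^ 2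
        ∂(Measure.pi fun _ : Fin m => μ)
      ≤ ((1 + ν) * (1 - α * (1 - β)) ^ 2 + 4 * α ^ 2 * L ^ 2 / m) * ‖xbar - xstar‖ ^ 2
        + ((1 + 1 / ν) * (α ^ 2 * L ^ 2 / m) + 2 * α ^ 2 * L ^ 2 / (m : ℝ) ^ 2) *
            (∑ i : Fin m, ‖X i - xbar‖ ^ 2)
        + 4 * α ^ 2 * B ^ 2 / m := by
  obtain ⟨hα0, hα1⟩ := hα
  obtain ⟨hβ0, hβ1⟩ := hβ
  have hm0 : (0:ℝ) < (m:ℝ) := by exact_mod_cast hm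
  have hm0' : ((m:ℝ)) ≠ 0 := ne_of_gt hm0
  -- the noise functions
  set n : Fin m → 𝒳 → EuclideanSpace ℝ (Fin d) :=
    fun j y => F j (X j) y - Fbari j (X j) with hn
  have hint : ∀ j, Integrable (n j) μ := by
    intro j
    exact (hInt j (X j)).sub (integrable_const _)
  have hzero : ∀ j, ∫ x, n j x ∂μ = 0 := by
    intro j
    rw [hn]
    rw [integral_sub (hInt j (X j)) (integrable_const _), integral_const]
    simp [hFbari]
  -- pointwise bounds
  have hFB : ∀ (j : Fin m) (x : 𝒳), ‖F j (X j) x‖ ≤ L * ‖X j - xstar‖ + B := by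
    intro j x
    calc ‖F j (X j) x‖ ≤ ‖F j (X j) x - F j xstar x‖ + ‖F j xstar x‖ := by
          simpa using norm_add_le (F j (X j) x - F j xstar x) (F j xstar x)
      _ ≤ L * ‖X j - xstar‖ + B := by
          refine add_le_add (hLip j (X j) xstar x) ?_
          have := hBd j x
          have h0 := norm_nonneg xstar
          linarith
  have hFbariB : ∀ j : Fin m, ‖Fbari j (X j)‖ ≤ L * ‖X j - xstar‖ + B := by
    intro j
    rw [hFbari]
    exact dsa_norm_integral_le_of_bound μ (hInt j (X j)) (hFB j)
  set C : ℝ := ∑ j : Fin m, (2 * (L * ‖X j - xstar‖ + B)) with hCdef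
  have hC : 0 ≤ C := Finset.sum_nonneg fun j _ => by positivity
  have hb : ∀ (j : Fin m) (x : 𝒳), ‖n j x‖ ≤ C := by
    intro j x
    have h1 : ‖n j x‖ ≤ 2 * (L * ‖X j - xstar‖ + B) := by
      rw [hn]
      calc ‖F j (X j) x - Fbari j (X j)‖ ≤ ‖F j (X j) x‖ + ‖Fbari j (X j)‖ :=
            norm_sub_le _ _
        _ ≤ 2 * (L * ‖X j - xstar‖ + B) := by
            have := hFB j x; have := hFbariB j; linarith
    refine h1.trans ?_
    exact Finset.single_le_sum (f := fun j => 2 * (L * ‖X j - xstar‖ + B))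
      (fun i _ => by positivity) (Finset.mem_univ j)
  -- column sums of W
  have hcol : ∀ j : Fin m, ∑ i : Fin m, W i j = 1 := by
    intro j
    rw [Finset.sum_congr rfl fun i _ => hWsym i j]
    exact hWrow j
  -- the deterministic drift
  set D : EuclideanSpace ℝ (Fin d) :=
    xbar - xstar + α • ((m:ℝ)⁻¹ • (∑ j : Fin m, Fbari j (X j)) - xbar) with hD
  -- key algebraic identity
  have key : ∀ ξ : Fin m → 𝒳,
      (m:ℝ)⁻¹ • ∑ i : Fin m, step ξ i - xstar
        = D + (α / (m:ℝ)) • ∑ j : Fin m, n j (ξ j) := by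
    intro ξ
    have h1 : ∑ i : Fin m, step ξ i
        = ∑ j : Fin m, (X j + α • (F j (X j) (ξ j) - X j)) := by
      simp_rw [hstep]
      rw [Finset.sum_comm]
      refine Finset.sum_congr rfl fun j _ => ?_
      rw [← Finset.sum_smul, hcol j, one_smul]
    rw [h1, hD, hxbar, hn]
    rw [Finset.sum_add_distrib, ← Finset.smul_sum, Finset.sum_sub_distrib,
      Finset.sum_sub_distrib]
    have hsc : ∑ _j : Fin m, Fbari _j (X _j) = ∑ j : Fin m, Fbari j (X j) := rfl
    module
  simp_rw [key]
  rw [dsa_expected_sq_norm μ n hint hzero hC hb D (α / (m:ℝ))]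
  -- bound the variance terms
  have hvar : ∀ j : Fin m, ∫ x, ‖n j x‖ ^ 2 ∂μ
      ≤ 2 * L ^ 2 * ‖X j - xstar‖ ^ 2 + 2 * B ^ 2 := by
    intro j
    have h1 : ∫ x, ‖n j x‖ ^ 2 ∂μ ≤ (L * ‖X j - xstar‖ + B) ^ 2 := by
      have := dsa_variance_le μ (hInt j (X j)) (K := L * ‖X j - xstar‖ + B)
        (by positivity) (hFB j)
      simp_rw [hn, hFbari]
      exact this
    refine h1.trans ?_
    nlinarith [sq_nonneg (L * ‖X j - xstar‖ - B)]
  have hsum0 : ∑ i : Fin m, (X i - xbar) = 0 := by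
    rw [Finset.sum_sub_distrib, Finset.sum_const, hxbar, Finset.card_univ, Fintype.card_fin,
      ← Nat.cast_smul_eq_nsmul ℝ, smul_smul, mul_inv_cancel₀ hm0', one_smul, sub_self]
  have hdecomp : ∑ j : Fin m, ‖X j - xstar‖ ^ 2
      = (∑ j : Fin m, ‖X j - xbar‖ ^ 2) + (m:ℝ) * ‖xbar - xstar‖ ^ 2 := by
    have := dsa_sum_sq_decomp (Finset.univ) X xbar xstar hsum0
    simpa [Finset.card_univ, Fintype.card_fin] using this
  have hVar : ∑ j : Fin m, ∫ x, ‖n j x‖ ^ 2 ∂μ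
      ≤ 2 * L ^ 2 * ((∑ j : Fin m, ‖X j - xbar‖ ^ 2) + (m:ℝ) * ‖xbar - xstar‖ ^ 2)
        + 2 * B ^ 2 * (m:ℝ) := by
    calc ∑ j : Fin m, ∫ x, ‖n j x‖ ^ 2 ∂μ
        ≤ ∑ j : Fin m, (2 * L ^ 2 * ‖X j - xstar‖ ^ 2 + 2 * B ^ 2) :=
          Finset.sum_le_sum fun j _ => hvar j
      _ = 2 * L ^ 2 * ∑ j : Fin m, ‖X j - xstar‖ ^ 2 + 2 * B ^ 2 * (m:ℝ) := by
          rw [Finset.sum_add_distrib, ← Finset.mul_sum, Finset.sum_const, Finset.card_univ,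
            Fintype.card_fin, nsmul_eq_mul]
          ring
      _ = 2 * L ^ 2 * ((∑ j : Fin m, ‖X j - xbar‖ ^ 2) + (m:ℝ) * ‖xbar - xstar‖ ^ 2)
          + 2 * B ^ 2 * (m:ℝ) := by rw [hdecomp]
  -- Lipschitz bound for the averaged maps
  have hFbariLip : ∀ (j : Fin m) (x x' : EuclideanSpace ℝ (Fin d)),
      ‖Fbari j x - Fbari j x'‖ ≤ L * ‖x - x'‖ := by
    intro j x x'
    rw [hFbari, hFbari, ← integral_sub (hInt j x) (hInt j x')]
    exact dsa_norm_integral_le_of_bound μ ((hInt j x).sub (hInt j x'))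
      (fun y => hLip j x x' y)
  -- split D into contraction and consensus parts
  set A : EuclideanSpace ℝ (Fin d) :=
    (1 - α) • (xbar - xstar) + α • (Fbar xbar - xstar) with hA
  set b : EuclideanSpace ℝ (Fin d) :=
    (m:ℝ)⁻¹ • ∑ j : Fin m, (Fbari j (X j) - Fbari j xbar) with hbdef
  have hAB : D = A + α • b := by
    rw [hD, hA, hbdef, hFbar xbar, hxbar, Finset.sum_sub_distrib]
    module
  have hAnorm : ‖A‖ ≤ (1 - α * (1 - β)) * ‖xbar - xstar‖ := by
    rw [hA]
    calc ‖(1 - α) • (xbar - xstar) + α • (Fbar xbar - xstar)‖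
        ≤ ‖(1 - α) • (xbar - xstar)‖ + ‖α • (Fbar xbar - xstar)‖ := norm_add_le _ _
      _ ≤ (1 - α) * ‖xbar - xstar‖ + α * (β * ‖xbar - xstar‖) := by
          refine add_le_add ?_ ?_
          · rw [norm_smul, Real.norm_eq_abs, abs_of_nonneg (by linarith)]
          · rw [norm_smul, Real.norm_eq_abs, abs_of_nonneg hα0.le]
            refine mul_le_mul_of_nonneg_left ?_ hα0.le
            calc ‖Fbar xbar - xstar‖ = ‖Fbar xbar - Fbar xstar‖ := by rw [← hfix]
              _ ≤ β * ‖xbar - xstar‖ := hcontr xbar xstar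
      _ = (1 - α * (1 - β)) * ‖xbar - xstar‖ := by ring
  have hbnorm : ‖b‖ ≤ (m:ℝ)⁻¹ * ∑ j : Fin m, L * ‖X j - xbar‖ := by
    rw [hbdef, norm_smul, Real.norm_eq_abs, abs_of_nonneg (by positivity)]
    refine mul_le_mul_of_nonneg_left ?_ (by positivity)
    calc ‖∑ j : Fin m, (Fbari j (X j) - Fbari j xbar)‖
        ≤ ∑ j : Fin m, ‖Fbari j (X j) - Fbari j xbar‖ := norm_sum_le _ _
      _ ≤ ∑ j : Fin m, L * ‖X j - xbar‖ :=
          Finset.sum_le_sum fun j _ => hFbariLip j (X j) xbar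
  have hbsq : ‖b‖ ^ 2 ≤ (m:ℝ)⁻¹ * L ^ 2 * ∑ j : Fin m, ‖X j - xbar‖ ^ 2 := by
    have h1 : ‖b‖ ^ 2 ≤ ((m:ℝ)⁻¹ * ∑ j : Fin m, L * ‖X j - xbar‖) ^ 2 := by
      refine pow_le_pow_left₀ (norm_nonneg b) hbnorm 2
    refine h1.trans ?_
    have h2 : (∑ j : Fin m, L * ‖X j - xbar‖) ^ 2
        ≤ (m:ℝ) * ∑ j : Fin m, (L * ‖X j - xbar‖) ^ 2 := by
      have := sq_sum_le_card_mul_sum_sq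
        (s := (Finset.univ : Finset (Fin m))) (f := fun j => L * ‖X j - xbar‖)
      simpa [Finset.card_univ, Fintype.card_fin] using this
    calc ((m:ℝ)⁻¹ * ∑ j : Fin m, L * ‖X j - xbar‖) ^ 2
        = ((m:ℝ)⁻¹) ^ 2 * (∑ j : Fin m, L * ‖X j - xbar‖) ^ 2 := by ring
      _ ≤ ((m:ℝ)⁻¹) ^ 2 * ((m:ℝ) * ∑ j : Fin m, (L * ‖X j - xbar‖) ^ 2) :=
          mul_le_mul_of_nonneg_left h2 (by positivity)
      _ = (m:ℝ)⁻¹ * L ^ 2 * ∑ j : Fin m, ‖X j - xbar‖ ^ 2 := by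
          rw [Finset.mul_sum, Finset.mul_sum, Finset.mul_sum]
          refine Finset.sum_congr rfl fun j _ => ?_
          field_simp
  have hDsq : ‖D‖ ^ 2 ≤ (1 + ν) * (1 - α * (1 - β)) ^ 2 * ‖xbar - xstar‖ ^ 2
      + (1 + 1 / ν) * (α ^ 2 * ((m:ℝ)⁻¹ * L ^ 2 * ∑ j : Fin m, ‖X j - xbar‖ ^ 2)) := by
    rw [hAB]
    refine (dsa_young_sq A (α • b) hν).trans ?_
    refine add_le_add ?_ ?_
    · have h1 : ‖A‖ ^ 2 ≤ ((1 - α * (1 - β)) * ‖xbar - xstar‖) ^ 2 := by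
        refine pow_le_pow_left₀ (norm_nonneg A) hAnorm 2
      calc (1 + ν) * ‖A‖ ^ 2 ≤ (1 + ν) * ((1 - α * (1 - β)) * ‖xbar - xstar‖) ^ 2 :=
            mul_le_mul_of_nonneg_left h1 (by linarith)
        _ = (1 + ν) * (1 - α * (1 - β)) ^ 2 * ‖xbar - xstar‖ ^ 2 := by ring
    · have h2 : ‖α • b‖ ^ 2 = α ^ 2 * ‖b‖ ^ 2 := by
        rw [norm_smul, Real.norm_eq_abs, mul_pow, sq_abs]
      rw [h2]
      refine mul_le_mul_of_nonneg_left ?_ (by positivity)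
      exact mul_le_mul_of_nonneg_left hbsq (by positivity)
  -- final assembly
  have hq2 : 0 ≤ 1 - α * (1 - β) := by nlinarith
  set Ssum : ℝ := ∑ j : Fin m, ‖X j - xbar‖ ^ 2 with hSsum
  have hSsumnonneg : 0 ≤ Ssum := Finset.sum_nonneg fun j _ => sq_nonneg _
  have hfinal : ‖D‖ ^ 2 + (α / (m:ℝ)) ^ 2 * ∑ j : Fin m, ∫ x, ‖n j x‖ ^ 2 ∂μ
      ≤ ((1 + ν) * (1 - α * (1 - β)) ^ 2 * ‖xbar - xstar‖ ^ 2
          + (1 + 1 / ν) * (α ^ 2 * ((m:ℝ)⁻¹ * L ^ 2 * Ssum)))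
        + (α / (m:ℝ)) ^ 2 * (2 * L ^ 2 * (Ssum + (m:ℝ) * ‖xbar - xstar‖ ^ 2)
          + 2 * B ^ 2 * (m:ℝ)) := by
    exact add_le_add hDsq (mul_le_mul_of_nonneg_left hVar (by positivity))
  refine hfinal.trans ?_
  have hrhs : ((1 + ν) * (1 - α * (1 - β)) ^ 2 + 4 * α ^ 2 * L ^ 2 / m) * ‖xbar - xstar‖ ^ 2
        + ((1 + 1 / ν) * (α ^ 2 * L ^ 2 / m) + 2 * α ^ 2 * L ^ 2 / (m : ℝ) ^ 2) * Ssum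
        + 4 * α ^ 2 * B ^ 2 / m
      - (((1 + ν) * (1 - α * (1 - β)) ^ 2 * ‖xbar - xstar‖ ^ 2
          + (1 + 1 / ν) * (α ^ 2 * ((m:ℝ)⁻¹ * L ^ 2 * Ssum)))
        + (α / (m:ℝ)) ^ 2 * (2 * L ^ 2 * (Ssum + (m:ℝ) * ‖xbar - xstar‖ ^ 2)
          + 2 * B ^ 2 * (m:ℝ)))
      = 2 * α ^ 2 * L ^ 2 / m * ‖xbar - xstar‖ ^ 2 + 2 * α ^ 2 * B ^ 2 / m := by
    field_simp
    ring
  have hpos : (0:ℝ) ≤ 2 * α ^ 2 * L ^ 2 / m * ‖xbar - xstar‖ ^ 2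
      + 2 * α ^ 2 * B ^ 2 / m := by positivity
  linarith [hrhs, hpos]
end

section
/- Under the stochastic approximation assumptions and with a gossip matrix W, let α ∈ (0,1] and X = (x_1,…,x_m) ∈ (ℝ^d)^m. Perform one decentralized stochastic approximation step with fresh i.i.d. samples ξ_1,…,ξ_m ∼ μ. Then E‖(I−J)X⁺‖_F² ≤ 2ρ²((1−α+αL)² + α²L²) ‖(I−J)X‖_F² + 4ρ²α²m((L+β)² + L²) ‖x̄ − x*‖₂² + 8ρ²α²m B². -/
set_option maxHeartbeats 1000000

open MeasureTheory
open scoped RealInnerProductSpace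

lemma eucl_norm_sq' {n : ℕ} (x : EuclideanSpace ℝ (Fin n)) : ‖x‖ ^ 2 = ∑ k, (x k) ^ 2 := by
  rw [EuclideanSpace.norm_eq, Real.sq_sqrt (by positivity)]
  simp [sq_abs]

lemma piLp_sum_apply' {m d : ℕ} (s : Finset (Fin m)) (f : Fin m → EuclideanSpace ℝ (Fin d))
    (k : Fin d) : ((∑ j ∈ s, f j) k) = ∑ j ∈ s, f j k := by
  induction s using Finset.induction with
  | empty => simp
  | insert _ _ h ih => rw [Finset.sum_insert h, Finset.sum_insert h, ← ih]; rfl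

lemma opA' {m d : ℕ} (M : Matrix (Fin m) (Fin m) ℝ) (v : Fin m → EuclideanSpace ℝ (Fin d)) :
    ∑ i, ‖∑ j, M i j • v j‖ ^ 2
      ≤ ‖Matrix.toEuclideanCLM (𝕜 := ℝ) M‖ ^ 2 * ∑ j, ‖v j‖ ^ 2 := by
  set T := Matrix.toEuclideanCLM (𝕜 := ℝ) M with hT
  set u : Fin d → EuclideanSpace ℝ (Fin m) :=
    fun k => (WithLp.equiv 2 (Fin m → ℝ)).symm (fun j => v j k) with hu
  have happ : ∀ (x : EuclideanSpace ℝ (Fin m)) (i : Fin m), T x i = ∑ j, M i j * x j := by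
    intro x i; rfl
  calc ∑ i, ‖∑ j, M i j • v j‖ ^ 2
      = ∑ i, ∑ k, (∑ j, M i j * v j k) ^ 2 := by
        refine Finset.sum_congr rfl fun i _ => ?_
        rw [eucl_norm_sq']
        refine Finset.sum_congr rfl fun k _ => ?_
        rw [piLp_sum_apply']
        rfl
    _ = ∑ k, ∑ i, (∑ j, M i j * v j k) ^ 2 := Finset.sum_comm
    _ = ∑ k : Fin d, ‖T (u k)‖ ^ 2 := by
        refine Finset.sum_congr rfl fun k _ => ?_
        rw [eucl_norm_sq']
        exact Finset.sum_congr rfl fun i _ => by rw [happ]; rfl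
    _ ≤ ∑ k : Fin d, ‖T‖ ^ 2 * ‖u k‖ ^ 2 := by
        refine Finset.sum_le_sum fun k _ => ?_
        rw [← mul_pow]
        exact pow_le_pow_left₀ (norm_nonneg _) (T.le_opNorm _) 2
    _ = ‖T‖ ^ 2 * ∑ j, ‖v j‖ ^ 2 := by
        rw [← Finset.mul_sum]
        congr 1
        calc ∑ k : Fin d, ‖u k‖ ^ 2 = ∑ k : Fin d, ∑ j : Fin m, (v j k) ^ 2 := by
              refine Finset.sum_congr rfl fun k _ => ?_
              rw [eucl_norm_sq']; rfl
          _ = ∑ j : Fin m, ∑ k : Fin d, (v j k) ^ 2 := Finset.sum_comm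
          _ = ∑ j, ‖v j‖ ^ 2 :=
              Finset.sum_congr rfl fun j _ => (eucl_norm_sq' (v j)).symm

lemma sum_norm_sub_sq_eq' {E : Type*} [NormedAddCommGroup E] [InnerProductSpace ℝ E]
    {ι : Type*} (s : Finset ι) (v : ι → E) (k : E) :
    ∑ j ∈ s, ‖v j - k‖ ^ 2
      = (∑ j ∈ s, ‖v j‖ ^ 2) - 2 * ⟪∑ j ∈ s, v j, k⟫ + s.card * ‖k‖ ^ 2 := by
  simp_rw [norm_sub_sq_real]
  rw [Finset.sum_add_distrib, Finset.sum_sub_distrib, sum_inner, Finset.mul_sum,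
    Finset.sum_const, nsmul_eq_mul]

/-- **One-step recursion for the consensus error of decentralized SA.**
One decentralized stochastic approximation step with gossip matrix `W`
(`ρ = ‖W − J‖₂` the spectral norm), stepsize `α ∈ (0,1]` and fresh i.i.d. samples
`ξ₁,…,ξₘ ∼ μ` satisfies
`E‖(I−J)X⁺‖_F² ≤ 2ρ²((1−α+αL)² + α²L²)‖(I−J)X‖_F²
  + 4ρ²α²m((L+β)² + L²)‖x̄ − x*‖² + 8ρ²α²mB²`. -/
theorem dsa_consensus_one_step_recursion
    (d m : ℕ) (hd : 1 ≤ d) (hm : 1 ≤ m)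
    (𝒳 : Type) [MeasurableSpace 𝒳] (μ : MeasureTheory.Measure 𝒳)
    [MeasureTheory.IsProbabilityMeasure μ]
    (F : Fin m → EuclideanSpace ℝ (Fin d) → 𝒳 → EuclideanSpace ℝ (Fin d))
    (hInt : ∀ i x, MeasureTheory.Integrable (F i x) μ)
    (Fbari : Fin m → EuclideanSpace ℝ (Fin d) → EuclideanSpace ℝ (Fin d))
    (hFbari : ∀ i x, Fbari i x = ∫ ξ, F i x ξ ∂μ)
    (Fbar : EuclideanSpace ℝ (Fin d) → EuclideanSpace ℝ (Fin d))
    (hFbar : ∀ x, Fbar x = (m : ℝ)⁻¹ • ∑ i : Fin m, Fbari i x)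
    (L : ℝ) (hL : 0 < L)
    (hLip : ∀ (i : Fin m) (x x' : EuclideanSpace ℝ (Fin d)) (ξ : 𝒳),
      ‖F i x ξ - F i x' ξ‖ ≤ L * ‖x - x'‖)
    (hLip' : ∀ (i : Fin m) (x x' : EuclideanSpace ℝ (Fin d)) (ξ : 𝒳),
      ‖(F i x ξ - x) - (F i x' ξ - x')‖ ≤ L * ‖x - x'‖)
    (β : ℝ) (hβ : 0 < β ∧ β < 1)
    (hcontr : ∀ x x', ‖Fbar x - Fbar x'‖ ≤ β * ‖x - x'‖)
    (xstar : EuclideanSpace ℝ (Fin d)) (hfix : xstar = Fbar xstar)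
    (B : ℝ) (hB : 0 < B)
    (hBd : ∀ (i : Fin m) (ξ : 𝒳), ‖F i xstar ξ‖ + ‖xstar‖ ≤ B)
    (α : ℝ) (hα : 0 < α ∧ α ≤ 1)
    (W : Matrix (Fin m) (Fin m) ℝ)
    (hW0 : ∀ i j, 0 ≤ W i j) (hWsym : ∀ i j, W i j = W j i)
    (hWrow : ∀ i, ∑ j : Fin m, W i j = 1)
    (X : Fin m → EuclideanSpace ℝ (Fin d))
    (xbar : EuclideanSpace ℝ (Fin d)) (hxbar : xbar = (m : ℝ)⁻¹ • ∑ i : Fin m, X i)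
    (step : (Fin m → 𝒳) → Fin m → EuclideanSpace ℝ (Fin d))
    (hstep : ∀ (ξ : Fin m → 𝒳) (i : Fin m),
      step ξ i = ∑ j : Fin m, W i j • (X j + α • (F j (X j) (ξ j) - X j)))
    (ρ : ℝ)
    (hρ : ρ = ‖Matrix.toEuclideanCLM (𝕜 := ℝ)
        (W - Matrix.of fun _ _ : Fin m => (m : ℝ)⁻¹)‖) :
    ∫ ξ, (∑ i : Fin m, ‖step ξ i - (m : ℝ)⁻¹ • ∑ j : Fin m, step ξ j‖ ^ 2)
        ∂(Measure.pi fun _ : Fin m => μ)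
      ≤ 2 * ρ ^ 2 * ((1 - α + α * L) ^ 2 + α ^ 2 * L ^ 2) *
            (∑ i : Fin m, ‖X i - xbar‖ ^ 2)
        + 4 * ρ ^ 2 * α ^ 2 * m * ((L + β) ^ 2 + L ^ 2) * ‖xbar - xstar‖ ^ 2
        + 8 * ρ ^ 2 * α ^ 2 * m * B ^ 2 := by
  obtain ⟨hα0, hα1⟩ := hα
  have hm0 : (0 : ℝ) < m := by exact_mod_cast Nat.lt_of_lt_of_le Nat.zero_lt_one hm
  set S : ℝ := ∑ i : Fin m, ‖X i - xbar‖ ^ 2 with hS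
  set r : ℝ := ‖xbar - xstar‖ with hr
  set C : ℝ := 2 * ρ ^ 2 * ((1 - α + α * L) ^ 2 + α ^ 2 * L ^ 2) * S
      + 4 * ρ ^ 2 * α ^ 2 * m * ((L + β) ^ 2 + L ^ 2) * r ^ 2
      + 8 * ρ ^ 2 * α ^ 2 * m * B ^ 2 with hCdef
  have hρ0 : 0 ≤ ρ := hρ ▸ norm_nonneg _
  have hS0 : 0 ≤ S := Finset.sum_nonneg fun i _ => by positivity
  have hρ2 : (0 : ℝ) ≤ ρ ^ 2 := sq_nonneg ρ
  have hP : (0 : ℝ) ≤ ρ ^ 2 * α ^ 2 * (m : ℝ) := by positivity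
  have base : (L * r + B) ^ 2 ≤ 2 * ((L + β) ^ 2 + L ^ 2) * r ^ 2 + 4 * B ^ 2 := by
    nlinarith [sq_nonneg (L * r - B), mul_nonneg (sq_nonneg (L + β)) (sq_nonneg r),
      sq_nonneg B]
  have h2 := mul_le_mul_of_nonneg_left base hP
  -- pointwise (in ξ) bound
  have key : ∀ ξ : Fin m → 𝒳,
      (∑ i : Fin m, ‖step ξ i - (m : ℝ)⁻¹ • ∑ j : Fin m, step ξ j‖ ^ 2) ≤ C := by
    intro ξ
    set G : Fin m → EuclideanSpace ℝ (Fin d) := fun j => F j (X j) (ξ j) with hG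
    set w : Fin m → EuclideanSpace ℝ (Fin d) := fun j => F j xbar (ξ j) with hw
    set c : Fin m → EuclideanSpace ℝ (Fin d) := fun j => G j - w j with hc
    set z : Fin m → EuclideanSpace ℝ (Fin d) := fun j => X j + α • (G j - X j) with hz
    set zb : EuclideanSpace ℝ (Fin d) := (m : ℝ)⁻¹ • ∑ j, z j with hzbdef
    set wb : EuclideanSpace ℝ (Fin d) := (m : ℝ)⁻¹ • ∑ j, w j with hwbdef
    set cb : EuclideanSpace ℝ (Fin d) := (m : ℝ)⁻¹ • ∑ j, c j with hcbdef
    set M : Matrix (Fin m) (Fin m) ℝ := W - Matrix.of fun _ _ : Fin m => (m : ℝ)⁻¹ with hMdef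
    have hM : ∀ i j, M i j = W i j - (m : ℝ)⁻¹ := fun i j => rfl
    have hWcol : ∀ j, ∑ i, W i j = 1 := fun j => by
      rw [Finset.sum_congr rfl fun i _ => hWsym i j]; exact hWrow j
    have hcard : (Finset.univ : Finset (Fin m)).card = m := by simp
    have hmsmul : ∀ x : EuclideanSpace ℝ (Fin d),
        (∑ _j : Fin m, x) = (m : ℝ) • x := by
      intro x
      rw [Finset.sum_const, hcard, ← Nat.cast_smul_eq_nsmul ℝ]
    have hinv : (m : ℝ)⁻¹ * (m : ℝ) = 1 := inv_mul_cancel₀ hm0.ne'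
    -- average of step equals zb
    have havg : (m : ℝ)⁻¹ • ∑ j, step ξ j = zb := by
      rw [hzbdef]
      congr 1
      calc ∑ i, step ξ i = ∑ i, ∑ j, W i j • z j := by
            refine Finset.sum_congr rfl fun i _ => ?_
            rw [hstep]
        _ = ∑ j, ∑ i, W i j • z j := Finset.sum_comm
        _ = ∑ j, z j := by
            refine Finset.sum_congr rfl fun j _ => ?_
            rw [← Finset.sum_smul, hWcol, one_smul]
    have hstepz : ∀ i, step ξ i = ∑ j, W i j • z j := fun i => hstep ξ i
    have hGj : ∀ j, G j = w j + c j := by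
      intro j; simp only [hc]; abel
    -- recentred step
    have h1 : ∀ i, step ξ i - zb = ∑ j, M i j • (z j - zb) := by
      intro i
      have e1 : ∑ j, M i j • (z j - zb)
          = ∑ j, (W i j • z j - W i j • zb - ((m : ℝ)⁻¹ • z j - (m : ℝ)⁻¹ • zb)) := by
        refine Finset.sum_congr rfl fun j _ => ?_
        rw [hM]; module
      rw [hstepz, e1, Finset.sum_sub_distrib, Finset.sum_sub_distrib, Finset.sum_sub_distrib,
        ← Finset.sum_smul, hWrow i, one_smul, ← Finset.smul_sum,
        hmsmul ((m : ℝ)⁻¹ • zb), smul_smul, mul_inv_cancel₀ hm0.ne', one_smul, ← hzbdef]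
      abel
    -- the decomposition z j - zb = a j + b j
    set a : Fin m → EuclideanSpace ℝ (Fin d) :=
      fun j => (1 - α) • (X j - xbar) + α • c j with ha
    set b : Fin m → EuclideanSpace ℝ (Fin d) := fun j => α • ((w j - wb) - cb) with hb
    have hsumz : (∑ j, z j)
        = (∑ j, X j) + α • (((∑ j, w j) + (∑ j, c j)) - (∑ j, X j)) := by
      calc ∑ j, z j = ∑ j, (X j + α • ((w j + c j) - X j)) :=
            Finset.sum_congr rfl fun j _ => by simp only [hz]; rw [← hGj j]
        _ = (∑ j, X j) + ∑ j, α • ((w j + c j) - X j) := Finset.sum_add_distrib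
        _ = (∑ j, X j) + α • ∑ j, ((w j + c j) - X j) := by rw [Finset.smul_sum]
        _ = (∑ j, X j) + α • (((∑ j, w j) + (∑ j, c j)) - (∑ j, X j)) := by
            rw [Finset.sum_sub_distrib, Finset.sum_add_distrib]
    have hzb : zb = xbar + α • ((wb + cb) - xbar) := by
      rw [hzbdef, hsumz, hxbar, hwbdef, hcbdef]
      module
    have hzdec : ∀ j, z j - zb = a j + b j := by
      intro j
      rw [hzb]
      simp only [hz, ha, hb]
      rw [hGj j]
      module
    have hcnorm : ∀ j, ‖c j‖ ≤ L * ‖X j - xbar‖ := fun j => hLip j (X j) xbar (ξ j)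
    -- bound on sum ‖a‖²
    have hA : ∑ j, ‖a j‖ ^ 2 ≤ (1 - α + α * L) ^ 2 * S := by
      rw [hS, Finset.mul_sum]
      refine Finset.sum_le_sum fun j _ => ?_
      have h2 : ‖a j‖ ≤ (1 - α + α * L) * ‖X j - xbar‖ := by
        calc ‖a j‖ ≤ ‖(1 - α) • (X j - xbar)‖ + ‖α • c j‖ := norm_add_le _ _
          _ = (1 - α) * ‖X j - xbar‖ + α * ‖c j‖ := by
              rw [norm_smul, norm_smul, Real.norm_eq_abs, Real.norm_eq_abs,
                abs_of_nonneg (by linarith), abs_of_nonneg hα0.le]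
          _ ≤ (1 - α) * ‖X j - xbar‖ + α * (L * ‖X j - xbar‖) := by
              have := hcnorm j
              nlinarith [norm_nonneg (X j - xbar)]
          _ = (1 - α + α * L) * ‖X j - xbar‖ := by ring
      calc ‖a j‖ ^ 2 ≤ ((1 - α + α * L) * ‖X j - xbar‖) ^ 2 :=
            pow_le_pow_left₀ (norm_nonneg _) h2 2
        _ = (1 - α + α * L) ^ 2 * ‖X j - xbar‖ ^ 2 := by ring
    -- sum of w j - wb is zero
    have hmwb : (m : ℝ) • wb = ∑ j, w j := by
      rw [hwbdef, smul_smul, mul_inv_cancel₀ hm0.ne', one_smul]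
    have hsum0 : ∑ j, (w j - wb) = 0 := by
      rw [Finset.sum_sub_distrib, hmsmul wb, hmwb, sub_self]
    have hBsum : ∑ j, ‖b j‖ ^ 2
        = α ^ 2 * (∑ j, ‖w j - wb‖ ^ 2 + m * ‖cb‖ ^ 2) := by
      have : ∀ j, ‖b j‖ ^ 2 = α ^ 2 * ‖(w j - wb) - cb‖ ^ 2 := by
        intro j
        rw [hb, norm_smul, Real.norm_eq_abs, mul_pow, sq_abs]
      rw [Finset.sum_congr rfl fun j _ => this j, ← Finset.mul_sum]
      congr 1
      rw [sum_norm_sub_sq_eq', hsum0, inner_zero_left, hcard]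
      ring
    have hw2 : ∑ j, ‖w j - wb‖ ^ 2 ≤ ∑ j, ‖w j‖ ^ 2 := by
      rw [sum_norm_sub_sq_eq', hcard, ← hmwb, real_inner_smul_left,
        real_inner_self_eq_norm_sq]
      nlinarith [sq_nonneg ‖wb‖]
    have hwj : ∀ j, ‖w j‖ ≤ L * r + B := by
      intro j
      have h3 : ‖w j‖ ≤ ‖F j xbar (ξ j) - F j xstar (ξ j)‖ + ‖F j xstar (ξ j)‖ := by
        have h4 := norm_add_le (F j xbar (ξ j) - F j xstar (ξ j)) (F j xstar (ξ j))
        simpa using h4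
      have h5 := hLip j xbar xstar (ξ j)
      have h6 := hBd j (ξ j)
      have h7 := norm_nonneg xstar
      rw [hr]
      linarith
    have hw3 : ∑ j, ‖w j‖ ^ 2 ≤ m * (L * r + B) ^ 2 := by
      calc ∑ j, ‖w j‖ ^ 2 ≤ ∑ _j : Fin m, (L * r + B) ^ 2 :=
            Finset.sum_le_sum fun j _ => pow_le_pow_left₀ (norm_nonneg _) (hwj j) 2
        _ = m * (L * r + B) ^ 2 := by rw [Finset.sum_const, hcard, nsmul_eq_mul]
    have hcsum : ∑ j, ‖c j‖ ^ 2 ≤ L ^ 2 * S := by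
      rw [hS, Finset.mul_sum]
      refine Finset.sum_le_sum fun j _ => ?_
      calc ‖c j‖ ^ 2 ≤ (L * ‖X j - xbar‖) ^ 2 :=
            pow_le_pow_left₀ (norm_nonneg _) (hcnorm j) 2
        _ = L ^ 2 * ‖X j - xbar‖ ^ 2 := by ring
    have hcb2 : (m : ℝ) * ‖cb‖ ^ 2 ≤ L ^ 2 * S := by
      have h8 : ‖cb‖ ≤ (m : ℝ)⁻¹ * ∑ j, ‖c j‖ := by
        rw [hcbdef, norm_smul, Real.norm_eq_abs, abs_of_nonneg (by positivity)]
        exact mul_le_mul_of_nonneg_left (norm_sum_le _ _) (by positivity)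
      have h9 : (∑ j, ‖c j‖) ^ 2 ≤ (m : ℝ) * ∑ j, ‖c j‖ ^ 2 := by
        have h := sq_sum_le_card_mul_sum_sq
          (s := (Finset.univ : Finset (Fin m))) (f := fun j => ‖c j‖)
        simpa using h
      have h10 : ‖cb‖ ^ 2 ≤ ((m : ℝ)⁻¹ * ∑ j, ‖c j‖) ^ 2 :=
        pow_le_pow_left₀ (norm_nonneg _) h8 2
      have e : (m : ℝ) * ((m : ℝ)⁻¹ * ∑ j, ‖c j‖) ^ 2
          = (m : ℝ)⁻¹ * (∑ j, ‖c j‖) ^ 2 := by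
        field_simp
      have h12 : (m : ℝ) * ‖cb‖ ^ 2 ≤ (m : ℝ)⁻¹ * (∑ j, ‖c j‖) ^ 2 := by
        rw [← e]; exact mul_le_mul_of_nonneg_left h10 hm0.le
      have e2 : (m : ℝ)⁻¹ * ((m : ℝ) * ∑ j, ‖c j‖ ^ 2) = ∑ j, ‖c j‖ ^ 2 := by
        field_simp
      have h13 : (m : ℝ)⁻¹ * (∑ j, ‖c j‖) ^ 2 ≤ ∑ j, ‖c j‖ ^ 2 := by
        rw [← e2]; exact mul_le_mul_of_nonneg_left h9 (by positivity)
      linarith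
    -- combine
    have hT : ∑ j, ‖z j - zb‖ ^ 2 ≤ 2 * ∑ j, ‖a j‖ ^ 2 + 2 * ∑ j, ‖b j‖ ^ 2 := by
      calc ∑ j, ‖z j - zb‖ ^ 2 = ∑ j, ‖a j + b j‖ ^ 2 :=
            Finset.sum_congr rfl fun j _ => by rw [hzdec j]
        _ ≤ ∑ j, (2 * ‖a j‖ ^ 2 + 2 * ‖b j‖ ^ 2) := by
            refine Finset.sum_le_sum fun j _ => ?_
            have h1 := pow_le_pow_left₀ (norm_nonneg (a j + b j))
              (norm_add_le (a j) (b j)) 2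
            nlinarith [sq_nonneg (‖a j‖ - ‖b j‖)]
        _ = 2 * ∑ j, ‖a j‖ ^ 2 + 2 * ∑ j, ‖b j‖ ^ 2 := by
            rw [Finset.sum_add_distrib, Finset.mul_sum, Finset.mul_sum]
    have hop : ∑ i, ‖step ξ i - (m : ℝ)⁻¹ • ∑ j, step ξ j‖ ^ 2
        ≤ ρ ^ 2 * ∑ j, ‖z j - zb‖ ^ 2 := by
      calc ∑ i, ‖step ξ i - (m : ℝ)⁻¹ • ∑ j, step ξ j‖ ^ 2
          = ∑ i, ‖∑ j, M i j • (z j - zb)‖ ^ 2 := by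
            refine Finset.sum_congr rfl fun i _ => ?_
            rw [havg, h1]
        _ ≤ ‖Matrix.toEuclideanCLM (𝕜 := ℝ) M‖ ^ 2 * ∑ j, ‖z j - zb‖ ^ 2 :=
            opA' M _
        _ = ρ ^ 2 * ∑ j, ‖z j - zb‖ ^ 2 := by rw [hρ]
    -- final arithmetic
    have hfin : ρ ^ 2 * ∑ j, ‖z j - zb‖ ^ 2 ≤ C := by
      have hTb : ∑ j, ‖z j - zb‖ ^ 2
          ≤ 2 * ((1 - α + α * L) ^ 2 * S)
            + 2 * (α ^ 2 * ((m : ℝ) * (L * r + B) ^ 2 + L ^ 2 * S)) := by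
        have hb2 : ∑ j, ‖b j‖ ^ 2 ≤ α ^ 2 * ((m : ℝ) * (L * r + B) ^ 2 + L ^ 2 * S) := by
          rw [hBsum]
          exact mul_le_mul_of_nonneg_left (by linarith [hw2, hw3, hcb2]) (sq_nonneg α)
        linarith [hT, hA, hb2]
      have step1 := mul_le_mul_of_nonneg_left hTb hρ2
      calc ρ ^ 2 * ∑ j, ‖z j - zb‖ ^ 2
          ≤ ρ ^ 2 * (2 * ((1 - α + α * L) ^ 2 * S)
            + 2 * (α ^ 2 * ((m : ℝ) * (L * r + B) ^ 2 + L ^ 2 * S))) := step1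
        _ = 2 * ρ ^ 2 * ((1 - α + α * L) ^ 2 + α ^ 2 * L ^ 2) * S
            + 2 * (ρ ^ 2 * α ^ 2 * (m : ℝ) * (L * r + B) ^ 2) := by ring
        _ ≤ 2 * ρ ^ 2 * ((1 - α + α * L) ^ 2 + α ^ 2 * L ^ 2) * S
            + 2 * (ρ ^ 2 * α ^ 2 * (m : ℝ)
              * (2 * ((L + β) ^ 2 + L ^ 2) * r ^ 2 + 4 * B ^ 2)) := by linarith
        _ = C := by rw [hCdef]; ring
    exact le_trans hop hfin
  -- integrate the pointwise bound
  have hbound : ∀ ξ : Fin m → 𝒳,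
      ‖∑ i : Fin m, ‖step ξ i - (m : ℝ)⁻¹ • ∑ j : Fin m, step ξ j‖ ^ 2‖ ≤ C := by
    intro ξ
    rw [Real.norm_eq_abs, abs_of_nonneg (Finset.sum_nonneg fun i _ => by positivity)]
    exact key ξ
  have hInt2 := norm_integral_le_of_norm_le_const
    (μ := Measure.pi fun _ : Fin m => μ)
    (f := fun ξ => ∑ i : Fin m, ‖step ξ i - (m : ℝ)⁻¹ • ∑ j : Fin m, step ξ j‖ ^ 2)
    (Filter.Eventually.of_forall hbound)
  rw [probReal_univ, mul_one, Real.norm_eq_abs] at hInt2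
  exact le_trans (le_abs_self _) hInt2
end
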